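/- arXiv:2411.04856 — 8 statements merged into one kernel-verified Lean document; each statement's English description precedes it below -/
import Mathlib

section
/- Let V be a finite-dimensional real vector space, let g and h be nondegenerate symmetric bilinear forms on V, let ω be a nondegenerate alternating bilinear form on V, and let A, B, J be linear endomorphisms of V satisfying g(AX,Y) = ω(X,Y), g(BX,Y) = h(X,Y) and ω(JX,Y) = −h(X,Y) for all X, Y ∈ V, together with A² = B² = Id and J² = −Id. Then the operators pairwise anti-commute, i.e. A∘B = −B∘A, A∘J = −J∘A, B∘J = −J∘B, and moreover A∘B∘J = Id. -/
/-!
Since `g (A X) = ω X`, `ω (J X) = -h X` and `h X = g (B X)`, nondegeneracy of `g` gives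
`A ∘ J = -B`, hence `J = -A ∘ B`. Then `J² = -Id` says `(A ∘ B)² = -Id`, which together with
`A² = B² = Id` forces `A ∘ B = -B ∘ A`; the remaining relations are formal consequences.
-/

section Ring

variable {R : Type*} [Ring R] {a b j : R}

theorem eq_neg_mul_of_mul_self_eq_one_of_mul_eq_neg (ha : a * a = 1) (haj : a * j = -b) :
    j = -(a * b) := by
  calc j = a * (a * j) := by rw [← mul_assoc, ha, one_mul]
    _ = -(a * b) := by rw [haj, mul_neg]

theorem mul_eq_neg_mul_comm_of_mul_mul_self_eq_neg_one (ha : a * a = 1) (hb : b * b = 1)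
    (hab : a * b * (a * b) = -1) : a * b = -(b * a) := by
  calc a * b = b * b * (a * b) := by rw [hb, one_mul]
    _ = b * (a * a) * b * (a * b) := by rw [ha, mul_one]
    _ = b * a * (a * b * (a * b)) := by simp only [mul_assoc]
    _ = -(b * a) := by rw [hab, mul_neg_one]

theorem mul_anticomm_of_mul_self_eq_one_of_mul_self_eq_neg_one (ha : a * a = 1) (hb : b * b = 1)
    (hj : j * j = -1) (haj : a * j = -b) :
    a * b = -(b * a) ∧ a * j = -(j * a) ∧ b * j = -(j * b) ∧ a * b * j = 1 := by
  obtain rfl := eq_neg_mul_of_mul_self_eq_one_of_mul_eq_neg ha haj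
  have hab : a * b * (a * b) = -1 := by rwa [neg_mul_neg] at hj
  have hba := mul_eq_neg_mul_comm_of_mul_mul_self_eq_neg_one ha hb hab
  refine ⟨hba, ?_, ?_, ?_⟩
  · rw [haj, neg_mul, neg_neg, hba, neg_mul, mul_assoc, ha, mul_one]
  · rw [mul_neg, neg_mul, neg_neg, mul_assoc a, hb, mul_one, hba, mul_neg, neg_neg, ← mul_assoc,
      hb, one_mul]
  · rw [mul_neg, hab, neg_neg]

end Ring

theorem LinearMap.SeparatingLeft.mul_eq_neg_of_recursion {R M : Type*} [CommRing R]
    [AddCommGroup M] [Module R M] {g h ω : M →ₗ[R] M →ₗ[R] R} {A B J : Module.End R M}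
    (hg : g.SeparatingLeft) (hA : ∀ X Y, g (A X) Y = ω X Y) (hB : ∀ X Y, g (B X) Y = h X Y)
    (hJ : ∀ X Y, ω (J X) Y = -h X Y) : A * J = -B := by
  refine LinearMap.ext fun X => LinearMap.ker_eq_bot.mp (separatingLeft_iff_ker_eq_bot.mp hg) ?_
  ext Y
  simp only [Module.End.mul_apply, LinearMap.neg_apply, map_neg, hA, hJ, hB]

theorem born_recursion_operators_anticommute_general
    (V : Type*) [AddCommGroup V] [Module ℝ V]
    (g h ω : V →ₗ[ℝ] V →ₗ[ℝ] ℝ) (A B J : V →ₗ[ℝ] V)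
    (hg_nondeg : ∀ X, (∀ Y, g X Y = 0) → X = 0)
    (hA : ∀ X Y, g (A X) Y = ω X Y)
    (hB : ∀ X Y, g (B X) Y = h X Y)
    (hJ : ∀ X Y, ω (J X) Y = - h X Y)
    (hA2 : ∀ X, A (A X) = X)
    (hB2 : ∀ X, B (B X) = X)
    (hJ2 : ∀ X, J (J X) = -X) :
    (∀ X, A (B X) = - B (A X)) ∧
    (∀ X, A (J X) = - J (A X)) ∧
    (∀ X, B (J X) = - J (B X)) ∧
    (∀ X, A (B (J X)) = X) := by
  obtain ⟨hAB, hAJ, hBJ, hABJ⟩ := mul_anticomm_of_mul_self_eq_one_of_mul_self_eq_neg_one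
    (LinearMap.ext hA2) (LinearMap.ext hB2) (LinearMap.ext hJ2)
    (LinearMap.SeparatingLeft.mul_eq_neg_of_recursion hg_nondeg hA hB hJ)
  exact ⟨LinearMap.congr_fun hAB, LinearMap.congr_fun hAJ, LinearMap.congr_fun hBJ,
    LinearMap.congr_fun hABJ⟩

/-- The recursion operators of a Born structure pairwise anti-commute and
satisfy `A ∘ B ∘ J = Id`. -/
theorem born_recursion_operators_anticommute
    (V : Type*) [AddCommGroup V] [Module ℝ V] [FiniteDimensional ℝ V]
    (g h ω : V →ₗ[ℝ] V →ₗ[ℝ] ℝ) (A B J : V →ₗ[ℝ] V)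
    (hg_symm : ∀ X Y, g X Y = g Y X)
    (hg_nondeg : ∀ X, (∀ Y, g X Y = 0) → X = 0)
    (hh_symm : ∀ X Y, h X Y = h Y X)
    (hh_nondeg : ∀ X, (∀ Y, h X Y = 0) → X = 0)
    (hω_alt : ∀ X, ω X X = 0)
    (hω_nondeg : ∀ X, (∀ Y, ω X Y = 0) → X = 0)
    (hA : ∀ X Y, g (A X) Y = ω X Y)
    (hB : ∀ X Y, g (B X) Y = h X Y)
    (hJ : ∀ X Y, ω (J X) Y = - h X Y)
    (hA2 : ∀ X, A (A X) = X)
    (hB2 : ∀ X, B (B X) = X)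
    (hJ2 : ∀ X, J (J X) = -X) :
    (∀ X, A (B X) = - B (A X)) ∧
    (∀ X, A (J X) = - J (A X)) ∧
    (∀ X, B (J X) = - J (B X)) ∧
    (∀ X, A (B (J X)) = X) :=
  born_recursion_operators_anticommute_general V g h ω A B J hg_nondeg hA hB hJ hA2 hB2 hJ2
end

section
/- Let V be a finite-dimensional real vector space with a Born structure (g, h, ω, A, B, J). Then for all X, Y ∈ V the following invariance identities hold: g(AX,AY) = −g(X,Y), g(BX,BY) = g(X,Y), g(JX,JY) = −g(X,Y); h(AX,AY) = h(X,Y), h(BX,BY) = h(X,Y), h(JX,JY) = h(X,Y); ω(AX,AY) = −ω(X,Y), ω(BX,BY) = −ω(X,Y), ω(JX,JY) = ω(X,Y). -/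
/-!
Call `T` a similitude of a bilinear form `φ` with multiplier `a` if `φ (T X) (T Y) = a φ X Y`.
From `g(A·,·) = ω`, `g(B·,·) = h` and the involutivity of `A` and `B`, the antisymmetry of `ω`
and the symmetry of `h` make `A` and `B` similitudes of `g` with multipliers `-1` and `1`.
Nondegeneracy of `g` turns `ω(J·,·) = -h` into `J = -AB`, and `J² = -1` then says that `A` and `B`
anticommute. A similitude of `g` that commutes or anticommutes with `A` (resp. `B`) is a
similitude of `ω` (resp. `h`), with the multiplier changed by the sign; this settles `A` and `B`,
and `J = -AB` settles `J` by multiplicativity.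
-/

section Similitude

variable {R M : Type*} [CommRing R] [AddCommGroup M] [Module R M]

def IsSimilitude (φ : M →ₗ[R] M →ₗ[R] R) (T : Module.End R M) (a : R) : Prop :=
  ∀ X Y, φ (T X) (T Y) = a * φ X Y

variable {φ ψ : M →ₗ[R] M →ₗ[R] R} {S T : Module.End R M} {a b c : R}

theorem IsSimilitude.mul (hS : IsSimilitude φ S a) (hT : IsSimilitude φ T b) :
    IsSimilitude φ (S * T) (a * b) := fun X Y => by
  rw [Module.End.mul_apply, Module.End.mul_apply, hS, hT, mul_assoc]

theorem IsSimilitude.neg (hT : IsSimilitude φ T a) : IsSimilitude φ (-T) a := fun X Y => by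
  simp only [LinearMap.neg_apply, map_neg, neg_neg]; exact hT X Y

theorem IsSimilitude.of_mul_self_eq_one (hψ : ∀ X Y, ψ X Y = ψ Y X)
    (hφ : ∀ X Y, ψ (T X) Y = φ X Y) (hφ_swap : ∀ X Y, φ Y X = a * φ X Y) (hT : T * T = 1) :
    IsSimilitude ψ T a := fun X Y => by
  have hTT : T (T Y) = Y := LinearMap.congr_fun hT Y
  rw [hφ, hφ_swap, ← hφ, hTT, hψ]

theorem IsSimilitude.induced (hφ : ∀ X Y, ψ (T X) Y = φ X Y) (hS : IsSimilitude ψ S a)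
    (hTS : T * S = c • (S * T)) : IsSimilitude φ S (c * a) := fun X Y => by
  have hTSX : T (S X) = c • S (T X) := LinearMap.congr_fun hTS X
  rw [← hφ, hTSX, map_smul, LinearMap.smul_apply, hS, hφ, smul_eq_mul, mul_assoc]

end Similitude

theorem mul_rev_eq_neg_of_mul_self_eq_one {α : Type*} [Ring α] {x y : α} (hx : x * x = 1)
    (hy : y * y = 1) (hxy : x * y * (x * y) = -1) : y * x = -(x * y) :=
  calc y * x = x * (x * y * (x * y)) * y := by
        simp only [← mul_assoc, hx, one_mul]; rw [mul_assoc, hy, mul_one]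
    _ = -(x * y) := by rw [hxy, mul_neg_one, neg_mul]

theorem eq_neg_mul_of_born {R M : Type*} [CommRing R] [AddCommGroup M] [Module R M]
    {g h ω : M →ₗ[R] M →ₗ[R] R} {A B J : Module.End R M} (hg : g.SeparatingLeft)
    (hA : ∀ X Y, g (A X) Y = ω X Y) (hB : ∀ X Y, g (B X) Y = h X Y)
    (hJ : ∀ X Y, ω (J X) Y = -h X Y) (hAA : A * A = 1) : J = -(A * B) := by
  have hAJ : A * J = -B := by
    ext X
    apply LinearMap.ker_eq_bot.mp (LinearMap.separatingLeft_iff_ker_eq_bot.mp hg)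
    ext Y
    simp only [Module.End.mul_apply, hA, hJ, LinearMap.neg_apply, map_neg, hB]
  rw [← one_mul J, ← hAA, mul_assoc, hAJ, mul_neg]

theorem born_bilinear_forms_invariance_general
    (V : Type*) [AddCommGroup V] [Module ℝ V]
    (g h ω : V →ₗ[ℝ] V →ₗ[ℝ] ℝ) (A B J : V →ₗ[ℝ] V)
    (hg_symm : ∀ X Y, g X Y = g Y X)
    (hg_nondeg : ∀ X, (∀ Y, g X Y = 0) → X = 0)
    (hh_symm : ∀ X Y, h X Y = h Y X)
    (hω_alt : ∀ X, ω X X = 0)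
    (hA : ∀ X Y, g (A X) Y = ω X Y)
    (hB : ∀ X Y, g (B X) Y = h X Y)
    (hJ : ∀ X Y, ω (J X) Y = - h X Y)
    (hA2 : ∀ X, A (A X) = X)
    (hB2 : ∀ X, B (B X) = X)
    (hJ2 : ∀ X, J (J X) = -X) :
    (∀ X Y, g (A X) (A Y) = - g X Y) ∧
    (∀ X Y, g (B X) (B Y) = g X Y) ∧
    (∀ X Y, g (J X) (J Y) = - g X Y) ∧
    (∀ X Y, h (A X) (A Y) = h X Y) ∧
    (∀ X Y, h (B X) (B Y) = h X Y) ∧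
    (∀ X Y, h (J X) (J Y) = h X Y) ∧
    (∀ X Y, ω (A X) (A Y) = - ω X Y) ∧
    (∀ X Y, ω (B X) (B Y) = - ω X Y) ∧
    (∀ X Y, ω (J X) (J Y) = ω X Y) := by
  have hAA : A * A = 1 := LinearMap.ext hA2
  have hBB : B * B = 1 := LinearMap.ext hB2
  have hJ_eq : J = -(A * B) := eq_neg_mul_of_born hg_nondeg hA hB hJ hAA
  have hBA : B * A = (-1 : ℝ) • (A * B) := by
    rw [neg_one_smul]
    refine mul_rev_eq_neg_of_mul_self_eq_one hAA hBB ?_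
    rw [← neg_mul_neg, ← hJ_eq]
    exact LinearMap.ext hJ2
  have gA : IsSimilitude g A (-1) := .of_mul_self_eq_one hg_symm hA
    (fun X Y => by rw [← LinearMap.IsAlt.neg hω_alt, neg_one_mul]) hAA
  have gB : IsSimilitude g B 1 := .of_mul_self_eq_one hg_symm hB
    (fun X Y => by rw [hh_symm, one_mul]) hBB
  have hA' : IsSimilitude h A 1 := by simpa using gA.induced hB hBA
  have hB' : IsSimilitude h B 1 := by simpa using gB.induced hB (one_smul ℝ _).symm
  have ωA : IsSimilitude ω A (-1) := by simpa using gA.induced hA (one_smul ℝ _).symm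
  have ωB : IsSimilitude ω B (-1) := by
    simpa using gB.induced hA (by rw [hBA, smul_smul, neg_one_mul, neg_neg, one_smul])
  have gJ : IsSimilitude g J (-1) := by simpa [hJ_eq] using (gA.mul gB).neg
  have hJ' : IsSimilitude h J 1 := by simpa [hJ_eq] using (hA'.mul hB').neg
  have ωJ : IsSimilitude ω J 1 := by simpa [hJ_eq] using (ωA.mul ωB).neg
  simp only [IsSimilitude, neg_one_mul, one_mul] at gA gB gJ hA' hB' hJ' ωA ωB ωJ
  exact ⟨gA, gB, gJ, hA', hB', hJ', ωA, ωB, ωJ⟩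

/-- Invariance properties of the bilinear forms `g`, `h`, `ω` of a Born structure
under the recursion operators `A`, `B`, `J`. -/
theorem born_bilinear_forms_invariance
    (V : Type*) [AddCommGroup V] [Module ℝ V] [FiniteDimensional ℝ V]
    (g h ω : V →ₗ[ℝ] V →ₗ[ℝ] ℝ) (A B J : V →ₗ[ℝ] V)
    (hg_symm : ∀ X Y, g X Y = g Y X)
    (hg_nondeg : ∀ X, (∀ Y, g X Y = 0) → X = 0)
    (hh_symm : ∀ X Y, h X Y = h Y X)
    (hh_nondeg : ∀ X, (∀ Y, h X Y = 0) → X = 0)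
    (hω_alt : ∀ X, ω X X = 0)
    (hω_nondeg : ∀ X, (∀ Y, ω X Y = 0) → X = 0)
    (hA : ∀ X Y, g (A X) Y = ω X Y)
    (hB : ∀ X Y, g (B X) Y = h X Y)
    (hJ : ∀ X Y, ω (J X) Y = - h X Y)
    (hA2 : ∀ X, A (A X) = X)
    (hB2 : ∀ X, B (B X) = X)
    (hJ2 : ∀ X, J (J X) = -X) :
    (∀ X Y, g (A X) (A Y) = - g X Y) ∧
    (∀ X Y, g (B X) (B Y) = g X Y) ∧
    (∀ X Y, g (J X) (J Y) = - g X Y) ∧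
    (∀ X Y, h (A X) (A Y) = h X Y) ∧
    (∀ X Y, h (B X) (B Y) = h X Y) ∧
    (∀ X Y, h (J X) (J Y) = h X Y) ∧
    (∀ X Y, ω (A X) (A Y) = - ω X Y) ∧
    (∀ X Y, ω (B X) (B Y) = - ω X Y) ∧
    (∀ X Y, ω (J X) (J Y) = ω X Y) :=
  born_bilinear_forms_invariance_general V g h ω A B J hg_symm hg_nondeg hh_symm hω_alt hA hB hJ hA2
    hB2 hJ2
end

section
/- Let 𝔤 be a finite-dimensional real Lie algebra with a Born structure (g, h, ω, A, B, J). Say A (respectively B) is integrable if both its +1- and −1-eigenspaces are Lie subalgebras of 𝔤, and say J is integrable if its Nijenhuis tensor N_J(X,Y) := [JX,JY] − J[JX,Y] − J[X,JY] − [X,Y] vanishes for all X, Y. Then: if A and B are integrable then J is integrable; if A and J are integrable then B is integrable; and if B and J are integrable then A is integrable. -/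
/-- A product structure `A` on a Lie algebra is integrable if both its `±1`-eigenspaces
are Lie subalgebras. -/
def ProductIntegrable {L : Type*} [LieRing L] [LieAlgebra ℝ L] (A : L →ₗ[ℝ] L) : Prop :=
  (∀ X Y, A X = X → A Y = Y → A ⁅X, Y⁆ = ⁅X, Y⁆) ∧
  (∀ X Y, A X = -X → A Y = -Y → A ⁅X, Y⁆ = -⁅X, Y⁆)

/-- A complex structure `J` on a Lie algebra is integrable if its Nijenhuis tensor
vanishes. -/
def ComplexIntegrable {L : Type*} [LieRing L] [LieAlgebra ℝ L] (J : L →ₗ[ℝ] L) : Prop :=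
  ∀ X Y, ⁅J X, J Y⁆ - J ⁅J X, Y⁆ - J ⁅X, J Y⁆ - ⁅X, Y⁆ = 0

/-!
Write `J = B A` and `N_T` for the Nijenhuis torsion `[Tx,Ty] - T[Tx,y] - T[x,Ty] + T²[x,y]`.
For an involution or a complex structure, integrability is the vanishing of `N_T`. The Born
relations force `A` and `B` to anticommute, so `B` exchanges the eigenspaces `L₊`, `L₋` of `A`
and `L = L₊ ⊕ B L₊ = L₊ ⊕ J L₊`. When `A` is integrable, on `L₊ × L₊` one has
`N_J = -A ∘ N_B`; since `N_T (T x) y = -T (N_T x y)` whenever `T²` is a scalar, each of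
`N_J`, `N_B` vanishes identically as soon as it vanishes on `L₊ × L₊`. Hence, for integrable
`A`, `J` is integrable iff `B` is. The third case follows by exchanging `A` and `B`, which
replaces `J` by `A B = -J`, and `N_{-J} = N_J`.
-/

section Nijenhuis

variable {R L : Type*} [CommRing R] [LieRing L] [LieAlgebra R L]

def nijenhuis (T : Module.End R L) (x y : L) : L :=
  ⁅T x, T y⁆ - T ⁅T x, y⁆ - T ⁅x, T y⁆ + T (T ⁅x, y⁆)

variable {T : Module.End R L}

theorem nijenhuis_neg (T : Module.End R L) : nijenhuis (-T) = nijenhuis T := by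
  ext x y
  simp only [nijenhuis, LinearMap.neg_apply, neg_lie, lie_neg, map_neg, neg_neg]

theorem nijenhuis_swap (T : Module.End R L) (x y : L) : nijenhuis T y x = -nijenhuis T x y := by
  simp only [nijenhuis, ← lie_skew y, ← lie_skew (T y), map_neg]
  abel

theorem nijenhuis_add_left (T : Module.End R L) (x x' y : L) :
    nijenhuis T (x + x') y = nijenhuis T x y + nijenhuis T x' y := by
  simp only [nijenhuis, map_add, add_lie]
  abel

theorem nijenhuis_add_right (T : Module.End R L) (x y y' : L) :
    nijenhuis T x (y + y') = nijenhuis T x y + nijenhuis T x y' := by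
  rw [nijenhuis_swap, nijenhuis_add_left, nijenhuis_swap T y, nijenhuis_swap T y', neg_add]

theorem nijenhuis_apply_left {c : R} (hT : ∀ x, T (T x) = c • x) (x y : L) :
    nijenhuis T (T x) y = -T (nijenhuis T x y) := by
  simp only [nijenhuis, hT, map_add, map_sub, smul_lie, map_smul]
  abel

theorem nijenhuis_apply_right {c : R} (hT : ∀ x, T (T x) = c • x) (x y : L) :
    nijenhuis T x (T y) = -T (nijenhuis T x y) := by
  rw [nijenhuis_swap, nijenhuis_apply_left hT, nijenhuis_swap T y, map_neg, neg_neg]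

theorem nijenhuis_eq_zero_of_eq_zero_on {c : R} (hT : ∀ x, T (T x) = c • x) {V : Set L}
    (hV : ∀ x, ∃ v ∈ V, ∃ w ∈ V, x = v + T w)
    (h : ∀ v ∈ V, ∀ w ∈ V, nijenhuis T v w = 0) (x y : L) : nijenhuis T x y = 0 := by
  obtain ⟨v, hv, w, hw, rfl⟩ := hV x
  obtain ⟨v', hv', w', hw', rfl⟩ := hV y
  simp only [nijenhuis_add_left, nijenhuis_add_right, nijenhuis_apply_left hT,
    nijenhuis_apply_right hT, h v hv v' hv', h v hv w' hw', h w hw v' hv', h w hw w' hw',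
    map_zero, neg_zero, add_zero]

end Nijenhuis

section Integrability

variable {L : Type*} [LieRing L] [LieAlgebra ℝ L]

theorem complexIntegrable_iff {J : Module.End ℝ L} (hJ2 : ∀ x, J (J x) = -x) :
    ComplexIntegrable J ↔ ∀ x y, nijenhuis J x y = 0 :=
  forall₂_congr fun x y => by rw [nijenhuis, hJ2, ← sub_eq_add_neg]

theorem productIntegrable_iff {P : Module.End ℝ L} (hP2 : ∀ x, P (P x) = x) :
    ProductIntegrable P ↔ ∀ x y, nijenhuis P x y = 0 := by
  constructor
  · rintro ⟨hplus, hminus⟩ x y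
    set S := ⁅x + P x, y + P y⁆ + ⁅x - P x, y - P y⁆
    set D := ⁅x + P x, y + P y⁆ - ⁅x - P x, y - P y⁆
    have hS : P S = D := by
      rw [map_add, hplus _ _ (by rw [map_add, hP2, add_comm]) (by rw [map_add, hP2, add_comm]),
        hminus _ _ (by rw [map_sub, hP2, neg_sub]) (by rw [map_sub, hP2, neg_sub]), ← sub_eq_add_neg]
    have h2N : (2 : ℝ) • nijenhuis P x y = S - P D := by
      simp only [S, D, nijenhuis, hP2, lie_add, add_lie, lie_sub, sub_lie, map_add, map_sub]
      module
    rw [← hS, hP2, sub_self] at h2N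
    exact (smul_eq_zero.1 h2N).resolve_left two_ne_zero
  · intro hN
    refine ⟨fun x y hx hy => ?_, fun x y hx hy => ?_⟩
    · have h2 : (2 : ℝ) • (P ⁅x, y⁆ - ⁅x, y⁆) = 0 := by
        rw [← neg_eq_zero, ← hN x y, nijenhuis, hx, hy, hP2]
        module
      exact sub_eq_zero.1 ((smul_eq_zero.1 h2).resolve_left two_ne_zero)
    · have h2 : (2 : ℝ) • (P ⁅x, y⁆ + ⁅x, y⁆) = 0 := by
        rw [← hN x y, nijenhuis, hx, hy, hP2]
        simp only [neg_lie, lie_neg, map_neg, neg_neg]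
        module
      exact eq_neg_of_add_eq_zero_left ((smul_eq_zero.1 h2).resolve_left two_ne_zero)

end Integrability

theorem exists_fixed_add_apply_fixed {M : Type*} [AddCommGroup M] [Module ℝ M]
    {A B : Module.End ℝ M} (hA2 : ∀ x, A (A x) = x) (hB2 : ∀ x, B (B x) = x)
    (hAB : ∀ x, A (B x) = -B (A x)) (x : M) :
    ∃ v ∈ {v | A v = v}, ∃ w ∈ {w | A w = w}, x = v + B w := by
  refine ⟨(2 : ℝ)⁻¹ • (x + A x), ?_, B ((2 : ℝ)⁻¹ • (x - A x)), ?_, ?_⟩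
  · simp only [Set.mem_ofPred_eq, map_smul, map_add, hA2, add_comm]
  · rw [Set.mem_ofPred_eq, hAB, ← map_neg, map_smul, map_sub, hA2, ← smul_neg, neg_sub]
  · rw [hB2]
    module

section AnticommutingInvolutions

variable {L : Type*} [LieRing L] [LieAlgebra ℝ L] {A B : Module.End ℝ L}

theorem nijenhuis_mul_of_fixed (hAB : ∀ x, A (B x) = -B (A x)) (hA : ProductIntegrable A)
    {x y : L} (hx : A x = x) (hy : A y = y) :
    nijenhuis (B * A) x y = -A (nijenhuis B x y) := by
  have hBx : A (B x) = -B x := by rw [hAB, hx]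
  have hBy : A (B y) = -B y := by rw [hAB, hy]
  simp only [nijenhuis, Module.End.mul_apply, hx, hy, map_add, map_sub, map_neg, hAB,
    hA.1 x y hx hy, hA.2 _ _ hBx hBy]
  abel

theorem forall_nijenhuis_mul_eq_zero_iff (hA2 : ∀ x, A (A x) = x) (hB2 : ∀ x, B (B x) = x)
    (hAB : ∀ x, A (B x) = -B (A x)) (hA : ProductIntegrable A) :
    (∀ x y, nijenhuis (B * A) x y = 0) ↔ ∀ x y, nijenhuis B x y = 0 := by
  have hfixed : ∀ v ∈ {v | A v = v}, ∀ w ∈ {w | A w = w},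
      nijenhuis (B * A) v w = 0 ↔ nijenhuis B v w = 0 := fun v hv w hw => by
    rw [nijenhuis_mul_of_fixed hAB hA hv hw, neg_eq_zero,
      LinearMap.map_eq_zero_iff A (Function.LeftInverse.injective hA2)]
  have hdecomp := exists_fixed_add_apply_fixed hA2 hB2 hAB
  constructor
  · intro hJ
    exact nijenhuis_eq_zero_of_eq_zero_on (c := 1) (by simpa using hB2) hdecomp
      fun v hv w hw => (hfixed v hv w hw).1 (hJ v w)
  · intro hN
    refine nijenhuis_eq_zero_of_eq_zero_on (c := -1) (by simp [hAB, hA2, hB2]) (fun x => ?_)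
      fun v hv w hw => (hfixed v hv w hw).2 (hN v w)
    obtain ⟨v, hv, w, hw, rfl⟩ := hdecomp x
    exact ⟨v, hv, w, hw, by rw [Module.End.mul_apply, hw]⟩

end AnticommutingInvolutions

theorem born_eq_mul_and_anticomm {L : Type*} [AddCommGroup L] [Module ℝ L]
    {g h ω : L →ₗ[ℝ] L →ₗ[ℝ] ℝ} {A B J : Module.End ℝ L}
    (hg_nondeg : ∀ X, (∀ Y, g X Y = 0) → X = 0)
    (hA : ∀ X Y, g (A X) Y = ω X Y) (hB : ∀ X Y, g (B X) Y = h X Y)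
    (hJ : ∀ X Y, ω (J X) Y = -h X Y) (hA2 : ∀ X, A (A X) = X) (hB2 : ∀ X, B (B X) = X)
    (hJ2 : ∀ X, J (J X) = -X) :
    J = B * A ∧ ∀ X, A (B X) = -B (A X) := by
  have hAJ : ∀ X, A (J X) = -B X := fun X =>
    eq_neg_of_add_eq_zero_left <| hg_nondeg _ fun Y => by
      rw [map_add, LinearMap.add_apply, hA, hB, hJ, neg_add_cancel]
  have hJ_eq : ∀ X, J X = -A (B X) := fun X => by rw [← hA2 (J X), hAJ, map_neg]
  have hAB : ∀ X, A (B X) = -B (A X) := fun X => by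
    have h1 : A (B (A (B X))) = -X := by simpa only [hJ_eq, map_neg, neg_neg] using hJ2 X
    have h2 : B (A (B X)) = -A X := by rw [← hA2 (B (A (B X))), h1, map_neg]
    rw [← hB2 (A (B X)), h2, map_neg]
  exact ⟨LinearMap.ext fun X => by rw [hJ_eq, hAB, neg_neg]; rfl, hAB⟩

theorem born_two_out_of_three_integrable_general
    (L : Type*) [LieRing L] [LieAlgebra ℝ L]
    (g h ω : L →ₗ[ℝ] L →ₗ[ℝ] ℝ) (A B J : L →ₗ[ℝ] L)
    (hg_nondeg : ∀ X, (∀ Y, g X Y = 0) → X = 0)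
    (hA : ∀ X Y, g (A X) Y = ω X Y)
    (hB : ∀ X Y, g (B X) Y = h X Y)
    (hJ : ∀ X Y, ω (J X) Y = - h X Y)
    (hA2 : ∀ X, A (A X) = X)
    (hB2 : ∀ X, B (B X) = X)
    (hJ2 : ∀ X, J (J X) = -X) :
    (ProductIntegrable A ∧ ProductIntegrable B → ComplexIntegrable J) ∧
    (ProductIntegrable A ∧ ComplexIntegrable J → ProductIntegrable B) ∧
    (ProductIntegrable B ∧ ComplexIntegrable J → ProductIntegrable A) := by
  obtain ⟨rfl, hAB⟩ := born_eq_mul_and_anticomm hg_nondeg hA hB hJ hA2 hB2 hJ2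
  have hBA : ∀ X, B (A X) = -A (B X) := fun X => by rw [hAB, neg_neg]
  have hJ_neg : A * B = -(B * A) := LinearMap.ext hAB
  refine ⟨fun ⟨hAI, hBI⟩ => ?_, fun ⟨hAI, hJI⟩ => ?_, fun ⟨hBI, hJI⟩ => ?_⟩
  · rw [complexIntegrable_iff hJ2, forall_nijenhuis_mul_eq_zero_iff hA2 hB2 hAB hAI]
    exact (productIntegrable_iff hB2).1 hBI
  · rw [productIntegrable_iff hB2, ← forall_nijenhuis_mul_eq_zero_iff hA2 hB2 hAB hAI]
    exact (complexIntegrable_iff hJ2).1 hJI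
  · rw [productIntegrable_iff hA2, ← forall_nijenhuis_mul_eq_zero_iff hB2 hA2 hBA hBI, hJ_neg,
      nijenhuis_neg]
    exact (complexIntegrable_iff hJ2).1 hJI

/-- In a Born structure on a Lie algebra, if two of the three recursion operators are
integrable, then so is the third. -/
theorem born_two_out_of_three_integrable
    (L : Type*) [LieRing L] [LieAlgebra ℝ L] [FiniteDimensional ℝ L]
    (g h ω : L →ₗ[ℝ] L →ₗ[ℝ] ℝ) (A B J : L →ₗ[ℝ] L)
    (hg_symm : ∀ X Y, g X Y = g Y X)
    (hg_nondeg : ∀ X, (∀ Y, g X Y = 0) → X = 0)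
    (hh_symm : ∀ X Y, h X Y = h Y X)
    (hh_nondeg : ∀ X, (∀ Y, h X Y = 0) → X = 0)
    (hω_alt : ∀ X, ω X X = 0)
    (hω_nondeg : ∀ X, (∀ Y, ω X Y = 0) → X = 0)
    (hA : ∀ X Y, g (A X) Y = ω X Y)
    (hB : ∀ X Y, g (B X) Y = h X Y)
    (hJ : ∀ X Y, ω (J X) Y = - h X Y)
    (hA2 : ∀ X, A (A X) = X)
    (hB2 : ∀ X, B (B X) = X)
    (hJ2 : ∀ X, J (J X) = -X) :
    (ProductIntegrable A ∧ ProductIntegrable B → ComplexIntegrable J) ∧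
    (ProductIntegrable A ∧ ComplexIntegrable J → ProductIntegrable B) ∧
    (ProductIntegrable B ∧ ComplexIntegrable J → ProductIntegrable A) :=
  born_two_out_of_three_integrable_general L g h ω A B J hg_nondeg hA hB hJ hA2 hB2 hJ2
end

section
/- Let 𝔤 be a finite-dimensional real Lie algebra, h a nondegenerate symmetric bilinear form on 𝔤, J a linear endomorphism of 𝔤, and 𝔤₊, 𝔤₋ two Lie subalgebras of 𝔤. Then the following are equivalent: (i) J² = −Id, h(JX,JY) = h(X,Y) for all X,Y, J is parallel for the Levi-Civita connection of h (∇_X(JY) = J(∇_X Y) for all X,Y), 𝔤 = 𝔤₊ ⊕ 𝔤₋ as vector spaces, h(X,Y) = 0 for X ∈ 𝔤₊ and Y ∈ 𝔤₋, and J(𝔤₊) = 𝔤₋; (ii) there exist bilinear forms g and ω and endomorphisms A and B such that (g, h, ω, A, B, J) is an integrable Born structure on 𝔤 whose +1- and −1-eigenspaces of A are 𝔤₊ and 𝔤₋, respectively. -/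
/-- A Born structure on a real Lie algebra `L`: nondegenerate symmetric bilinear forms
`g`, `h`, a nondegenerate alternating bilinear form `ω`, and endomorphisms `A`, `B`, `J`
with `g(AX,Y) = ω(X,Y)`, `g(BX,Y) = h(X,Y)`, `ω(JX,Y) = −h(X,Y)`,
`A² = B² = Id` and `J² = −Id`. -/
def IsBornStructure {L : Type*} [LieRing L] [LieAlgebra ℝ L]
    (g h ω : L →ₗ[ℝ] L →ₗ[ℝ] ℝ) (A B J : L →ₗ[ℝ] L) : Prop :=
  (∀ X Y, g X Y = g Y X) ∧ (∀ X, (∀ Y, g X Y = 0) → X = 0) ∧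
  (∀ X Y, h X Y = h Y X) ∧ (∀ X, (∀ Y, h X Y = 0) → X = 0) ∧
  (∀ X, ω X X = 0) ∧ (∀ X, (∀ Y, ω X Y = 0) → X = 0) ∧
  (∀ X Y, g (A X) Y = ω X Y) ∧
  (∀ X Y, g (B X) Y = h X Y) ∧
  (∀ X Y, ω (J X) Y = - h X Y) ∧
  (∀ X, A (A X) = X) ∧ (∀ X, B (B X) = X) ∧ (∀ X, J (J X) = -X)

/-- Integrability of a Born structure: `ω` is closed, the Nijenhuis tensor of `J`
vanishes, and the `±1`-eigenspaces of `A` are Lie subalgebras. -/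
def IsIntegrableBornStructure {L : Type*} [LieRing L] [LieAlgebra ℝ L]
    (g h ω : L →ₗ[ℝ] L →ₗ[ℝ] ℝ) (A B J : L →ₗ[ℝ] L) : Prop :=
  IsBornStructure g h ω A B J ∧
  (∀ X Y Z, ω ⁅X, Y⁆ Z + ω ⁅Y, Z⁆ X + ω ⁅Z, X⁆ Y = 0) ∧
  (∀ X Y, ⁅J X, J Y⁆ - J ⁅J X, Y⁆ - J ⁅X, J Y⁆ - ⁅X, Y⁆ = 0) ∧
  (∀ X Y, A X = X → A Y = Y → A ⁅X, Y⁆ = ⁅X, Y⁆) ∧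
  (∀ X Y, A X = -X → A Y = -Y → A ⁅X, Y⁆ = -⁅X, Y⁆)

/-!
Given the splitting, let `A` be the reflection in `𝔤₊` along `𝔤₋`. Orthogonality of the summands
makes `A` self-adjoint for `h`, and `J 𝔤₊ = 𝔤₋` makes `A` anticommute with `J`; then
`g = h(JA·, ·)`, `ω = h(J·, ·)`, `B = JA` is a Born structure. Conversely every Born structure
with given `h`, `J`, `A` has this shape: `ω = h(J·, ·)`, `B = -AJ`, and `B² = 1` forces `AJ = -JA`.
On the integrability side, for the Levi-Civita connection `J` is parallel iff `ω` is closed and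
`N_J = 0`, while the eigenspaces of `A` are subalgebras because `𝔤₊` and `𝔤₋` are.
-/

open LinearMap (ker)

section Involution

variable {K E : Type*} [AddCommGroup E]

section CommRing

variable [CommRing K] [Module K E] {A : E →ₗ[K] E}

theorem mem_ker_sub_id_iff {x : E} : x ∈ ker (A - LinearMap.id) ↔ A x = x := by
  simp [sub_eq_zero]

theorem mem_ker_add_id_iff {x : E} : x ∈ ker (A + LinearMap.id) ↔ A x = -x := by
  simp [add_eq_zero_iff_eq_neg]

theorem apply_apply_eq_neg_of_isometry {h : E →ₗ[K] E →ₗ[K] K} {J : E →ₗ[K] E}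
    (hJ : ∀ x, J (J x) = -x) (hJh : ∀ x y, h (J x) (J y) = h x y) (x y : E) :
    h (J x) y = -h x (J y) := by
  rw [← hJh x (J y), hJ, map_neg, neg_neg]

end CommRing

variable [Field K] [CharZero K] [Module K E] {A : E →ₗ[K] E}

theorem exists_mem_ker_sub_id_mem_ker_add_id_add_eq (hA : ∀ x, A (A x) = x) (x : E) :
    ∃ a ∈ ker (A - LinearMap.id), ∃ b ∈ ker (A + LinearMap.id), a + b = x := by
  refine ⟨(2⁻¹ : K) • (x + A x), ?_, (2⁻¹ : K) • (x - A x), ?_, by module⟩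
  · rw [mem_ker_sub_id_iff, map_smul, map_add, hA, add_comm]
  · rw [mem_ker_add_id_iff, map_smul, map_sub, hA]
    module

theorem isCompl_ker_sub_id_ker_add_id (hA : ∀ x, A (A x) = x) :
    IsCompl (ker (A - LinearMap.id)) (ker (A + LinearMap.id)) := by
  refine ⟨Submodule.disjoint_def.2 fun x hp hm => ?_, codisjoint_iff.2 <| eq_top_iff.2
    fun x _ => Submodule.mem_sup.2 (exists_mem_ker_sub_id_mem_ker_add_id_add_eq hA x)⟩
  rw [mem_ker_sub_id_iff] at hp
  rw [mem_ker_add_id_iff] at hm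
  calc x = (2⁻¹ : K) • (x + A x) := by rw [hp]; module
    _ = 0 := by rw [hm, add_neg_cancel, smul_zero]

theorem exists_involution_ker_eq_of_isCompl {p q : Submodule K E} (hpq : IsCompl p q) :
    ∃ A : E →ₗ[K] E, (∀ x, A (A x) = x) ∧
      ker (A - LinearMap.id) = p ∧ ker (A + LinearMap.id) = q := by
  let A := LinearMap.ofIsCompl hpq p.subtype (-q.subtype)
  have hAp : ∀ x ∈ p, A x = x := fun x hx => LinearMap.ofIsCompl_apply_left hpq ⟨x, hx⟩
  have hAq : ∀ x ∈ q, A x = -x := fun x hx => LinearMap.ofIsCompl_apply_right hpq ⟨x, hx⟩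
  have hA : A ∘ₗ A = LinearMap.id := LinearMap.ext_on_codisjoint hpq.codisjoint
    (fun x hx => by simp [hAp x hx]) (fun x hx => by simp [hAq x hx])
  have hA' : ∀ x, A (A x) = x := LinearMap.congr_fun hA
  have hp : p ≤ ker (A - LinearMap.id) := fun x hx => mem_ker_sub_id_iff.2 (hAp x hx)
  have hq : q ≤ ker (A + LinearMap.id) := fun x hx => mem_ker_add_id_iff.2 (hAq x hx)
  have hK := isCompl_ker_sub_id_ker_add_id hA'
  refine ⟨A, hA', ?_, ?_⟩
  · exact ((le_iff_eq_of_codisjoint_of_disjoint (hpq.codisjoint.mono_right hq)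
      hK.disjoint.symm).1 hp).symm
  · exact ((le_iff_eq_of_codisjoint_of_disjoint (hpq.codisjoint.symm.mono_right hp)
      hK.disjoint).1 hq).symm

theorem map_ker_sub_id_eq_ker_add_id_iff (hA : ∀ x, A (A x) = x) {J : E →ₗ[K] E}
    (hJ : ∀ x, J (J x) = -x) :
    (ker (A - LinearMap.id)).map J = ker (A + LinearMap.id) ↔ ∀ x, A (J x) = -J (A x) := by
  constructor
  · intro hmap
    suffices A ∘ₗ J = -(J ∘ₗ A) from LinearMap.congr_fun this
    refine LinearMap.ext_on_codisjoint (isCompl_ker_sub_id_ker_add_id hA).codisjoint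
      (fun x hx => ?_) (fun y hy => ?_)
    · have hJx : J x ∈ ker (A + LinearMap.id) := hmap ▸ Submodule.mem_map_of_mem hx
      rw [SetLike.mem_coe, mem_ker_sub_id_iff] at hx
      rw [mem_ker_add_id_iff] at hJx
      simp [hJx, hx]
    · obtain ⟨x, hx, rfl⟩ :=
        Submodule.mem_map.1 (hmap ▸ hy : y ∈ (ker (A - LinearMap.id)).map J)
      rw [mem_ker_sub_id_iff] at hx
      rw [SetLike.mem_coe, mem_ker_add_id_iff] at hy
      simp [hJ, hx, hy]
  · intro hAJ
    ext y
    refine ⟨fun ⟨x, hx, hxy⟩ => ?_, fun hy => ⟨-J y, ?_, by rw [map_neg, hJ, neg_neg]⟩⟩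
    · rw [SetLike.mem_coe, mem_ker_sub_id_iff] at hx
      rw [← hxy, mem_ker_add_id_iff, hAJ, hx]
    · rw [mem_ker_add_id_iff] at hy
      rw [SetLike.mem_coe, mem_ker_sub_id_iff, map_neg, hAJ, hy, map_neg, neg_neg]

theorem selfAdjoint_iff_ker_orthogonal (hA : ∀ x, A (A x) = x) {h : E →ₗ[K] E →ₗ[K] K}
    (hh : ∀ x y, h x y = h y x) :
    (∀ x y, h (A x) y = h x (A y)) ↔
      ∀ x ∈ ker (A - LinearMap.id), ∀ y ∈ ker (A + LinearMap.id), h x y = 0 := by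
  constructor
  · intro hAh x hx y hy
    rw [mem_ker_sub_id_iff] at hx
    rw [mem_ker_add_id_iff] at hy
    refine self_eq_neg.1 ?_
    rw [← map_neg, ← hy, ← hAh, hx]
  · intro horth x y
    obtain ⟨a, ha, b, hb, rfl⟩ := exists_mem_ker_sub_id_mem_ker_add_id_add_eq hA x
    obtain ⟨c, hc, d, hd, rfl⟩ := exists_mem_ker_sub_id_mem_ker_add_id_add_eq hA y
    have had := horth a ha d hd
    have hbc := hh b c ▸ horth c hc b hb
    rw [mem_ker_sub_id_iff] at ha hc
    rw [mem_ker_add_id_iff] at hb hd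
    simp only [map_add, LinearMap.add_apply, map_neg, LinearMap.neg_apply, ha, hb, hc, hd,
      had, hbc]
    ring

end Involution

section Born

variable {L : Type*} [LieRing L] [LieAlgebra ℝ L] {g h ω : L →ₗ[ℝ] L →ₗ[ℝ] ℝ}
  {A B J : L →ₗ[ℝ] L}

theorem isBornStructure_of_compatible (hh_symm : ∀ X Y, h X Y = h Y X)
    (hh_nondeg : ∀ X, (∀ Y, h X Y = 0) → X = 0) (hJ : ∀ X, J (J X) = -X)
    (hJh : ∀ X Y, h (J X) (J Y) = h X Y) (hA : ∀ X, A (A X) = X)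
    (hAh : ∀ X Y, h (A X) Y = h X (A Y)) (hAJ : ∀ X, A (J X) = -J (A X)) :
    IsBornStructure (h ∘ₗ J ∘ₗ A) h (h ∘ₗ J) A (J ∘ₗ A) J := by
  have hJ_skew := apply_apply_eq_neg_of_isometry hJ hJh
  have hJ_inj : ∀ X, J X = 0 → X = 0 := fun X hX =>
    calc X = -J (J X) := by rw [hJ, neg_neg]
      _ = 0 := by rw [hX, map_zero, neg_zero]
  have hB_sq : ∀ X, J (A (J (A X))) = X := fun X => by rw [hAJ, hA, map_neg, hJ, neg_neg]
  refine ⟨fun X Y => ?_, fun X hX => ?_, hh_symm, hh_nondeg, fun X => ?_, fun X hX => ?_,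
    fun X Y => ?_, fun X Y => ?_, fun X Y => ?_, hA, hB_sq, hJ⟩
  all_goals simp only [LinearMap.comp_apply] at *
  · rw [hJ_skew (A Y), hAh, hAJ, map_neg, neg_neg]
    exact hh_symm _ _
  · rw [← hA X, hJ_inj _ (hh_nondeg _ hX), map_zero]
  · have := hJ_skew X X
    rw [hh_symm X] at this
    linarith
  · exact hJ_inj X (hh_nondeg _ hX)
  · rw [hA]
  · rw [hB_sq]
  · rw [hJ, map_neg, LinearMap.neg_apply]

namespace IsBornStructure

variable (hBorn : IsBornStructure g h ω A B J)
include hBorn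

theorem omega_apply (X Y : L) : ω X Y = h (J X) Y := by
  obtain ⟨-, -, -, -, -, -, -, -, hωJ, -, -, hJ⟩ := hBorn
  simpa [hJ] using hωJ (-J X) Y

theorem isometry_J (X Y : L) : h (J X) (J Y) = h X Y := by
  have hω := hBorn.omega_apply
  obtain ⟨-, -, hh_symm, -, hω_alt, -, -, -, hωJ, -, -, -⟩ := hBorn
  calc h (J X) (J Y) = ω X (J Y) := (hω X (J Y)).symm
    _ = -ω (J Y) X := (LinearMap.IsAlt.neg hω_alt (J Y) X).symm
    _ = h X Y := by rw [hωJ, neg_neg, hh_symm]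

theorem anticomm_A_J (X : L) : A (J X) = -J (A X) := by
  obtain ⟨-, hg_nondeg, -, -, -, -, hgA, hgB, hωJ, hA, hB_sq, hJ⟩ := hBorn
  have hB_eq : ∀ X, B X = -A (J X) := fun X => by
    rw [← sub_eq_zero, sub_neg_eq_add]
    refine hg_nondeg _ fun Y => ?_
    rw [map_add, LinearMap.add_apply, hgB, hgA, hωJ, add_neg_cancel]
  have hJAJ : ∀ Y, J (A (J Y)) = A Y := fun Y => by
    simpa [hB_eq, hA] using congrArg A (hB_sq Y)
  rw [← hJAJ (J X), hJ, map_neg, map_neg]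

theorem selfAdjoint_A (X Y : L) : h (A X) Y = h X (A Y) := by
  have hJh := hBorn.isometry_J
  have hAJ := hBorn.anticomm_A_J
  have hω := hBorn.omega_apply
  obtain ⟨hg_symm, -, hh_symm, -, -, -, hgA, -, -, hA, -, hJ⟩ := hBorn
  have hg : ∀ X Z, g X Z = h (J (A X)) Z := fun X Z => by rw [← hω, ← hgA, hA]
  calc h (A X) Y = g X (J Y) := by rw [hg, hJh]
    _ = g (J Y) X := hg_symm _ _
    _ = h X (A Y) := by rw [hg, hAJ, map_neg, hJ, neg_neg, hh_symm]

end IsBornStructure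

end Born

section LeviCivita

variable {L : Type*} [LieRing L] [LieAlgebra ℝ L] {h : L →ₗ[ℝ] L →ₗ[ℝ] ℝ}
  {D : L →ₗ[ℝ] L →ₗ[ℝ] L} {J : L →ₗ[ℝ] L}

theorem torsion_free_of_koszul (hh_nondeg : ∀ X, (∀ Y, h X Y = 0) → X = 0)
    (hKoszul : ∀ X Y Z, 2 * h (D X Y) Z = h ⁅X, Y⁆ Z - h Y ⁅X, Z⁆ - h X ⁅Y, Z⁆) (X Y : L) :
    D X Y - D Y X = ⁅X, Y⁆ := by
  rw [← sub_eq_zero]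
  refine hh_nondeg _ fun Z => ?_
  have hXY := hKoszul X Y Z
  have hYX := hKoszul Y X Z
  rw [← lie_skew Y X] at hYX
  simp only [map_sub, map_neg, LinearMap.sub_apply, LinearMap.neg_apply] at hXY hYX ⊢
  linarith

theorem metric_of_koszul (hh_symm : ∀ X Y, h X Y = h Y X)
    (hKoszul : ∀ X Y Z, 2 * h (D X Y) Z = h ⁅X, Y⁆ Z - h Y ⁅X, Z⁆ - h X ⁅Y, Z⁆) (X Y Z : L) :
    h (D X Y) Z + h Y (D X Z) = 0 := by
  have hXYZ := hKoszul X Y Z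
  have hXZY := hKoszul X Z Y
  rw [← lie_skew Z Y, map_neg] at hXZY
  linarith [hh_symm Y (D X Z), hh_symm ⁅X, Y⁆ Z, hh_symm ⁅X, Z⁆ Y]

theorem closed_of_parallel {ω : L →ₗ[ℝ] L →ₗ[ℝ] ℝ} (hω : ∀ X Y, ω X Y = -ω Y X)
    (hD : ∀ X Y, D X Y - D Y X = ⁅X, Y⁆) (hωD : ∀ X Y Z, ω (D X Y) Z + ω Y (D X Z) = 0)
    (X Y Z : L) : ω ⁅X, Y⁆ Z + ω ⁅Y, Z⁆ X + ω ⁅Z, X⁆ Y = 0 := by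
  have hbr_left : ∀ X Y Z, ω ⁅X, Y⁆ Z = ω X (D Y Z) - ω Y (D X Z) := fun X Y Z => by
    rw [← hD, map_sub, LinearMap.sub_apply]
    linarith [hωD X Y Z, hωD Y X Z]
  have hbr_right : ∀ X Y Z, ω X ⁅Y, Z⁆ = ω X (D Y Z) - ω X (D Z Y) := fun X Y Z => by
    rw [← hD, map_sub]
  -- expanding every bracket turns the cyclic sum into minus itself
  linarith [hbr_left X Y Z, hbr_left Y Z X, hbr_left Z X Y, hbr_right X Y Z, hbr_right Y Z X,
    hbr_right Z X Y, hω ⁅Y, Z⁆ X, hω ⁅Z, X⁆ Y, hω ⁅X, Y⁆ Z]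

theorem nijenhuis_eq_zero_of_parallel (hJ : ∀ X, J (J X) = -X)
    (hD : ∀ X Y, D X Y - D Y X = ⁅X, Y⁆) (hDJ : ∀ X Y, D X (J Y) = J (D X Y)) (X Y : L) :
    ⁅J X, J Y⁆ - J ⁅J X, Y⁆ - J ⁅X, J Y⁆ - ⁅X, Y⁆ = 0 := by
  simp only [← hD, map_sub, hDJ, hJ]
  abel

theorem parallel_of_closed_of_nijenhuis (hh_symm : ∀ X Y, h X Y = h Y X)
    (hh_nondeg : ∀ X, (∀ Y, h X Y = 0) → X = 0)
    (hKoszul : ∀ X Y Z, 2 * h (D X Y) Z = h ⁅X, Y⁆ Z - h Y ⁅X, Z⁆ - h X ⁅Y, Z⁆)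
    (hJ : ∀ X, J (J X) = -X) (hJh : ∀ X Y, h (J X) (J Y) = h X Y)
    (hclosed : ∀ X Y Z, h (J ⁅X, Y⁆) Z + h (J ⁅Y, Z⁆) X + h (J ⁅Z, X⁆) Y = 0)
    (hN : ∀ X Y, ⁅J X, J Y⁆ - J ⁅J X, Y⁆ - J ⁅X, J Y⁆ - ⁅X, Y⁆ = 0) (X Y : L) :
    D X (J Y) = J (D X Y) := by
  have hJ_skew := apply_apply_eq_neg_of_isometry hJ hJh
  -- Koszul gives `2 h(∇_X (JY) - J ∇_X Y, Z) = dω(X, JY, JZ) - dω(X, Y, Z)` once `N_J = 0`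
  refine sub_eq_zero.1 (hh_nondeg _ fun Z => ?_)
  have hNJ : J ⁅J Y, J Z⁆ = J ⁅Y, Z⁆ - ⁅J Y, Z⁆ - ⁅Y, J Z⁆ := by
    have := congrArg J (hN Y Z)
    simp only [map_sub, hJ, map_zero] at this
    rw [← sub_eq_zero, ← this]
    abel
  have hNJ_X : h (J ⁅J Y, J Z⁆) X = h (J ⁅Y, Z⁆) X - h ⁅J Y, Z⁆ X - h ⁅Y, J Z⁆ X := by
    simp only [hNJ, map_sub, LinearMap.sub_apply]
  have hZX : h (J ⁅Z, X⁆) Y = -h (J ⁅X, Z⁆) Y := by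
    rw [← lie_skew Z X, map_neg, map_neg, LinearMap.neg_apply]
  have hJZX : h (J ⁅J Z, X⁆) (J Y) = -h ⁅X, J Z⁆ Y := by
    rw [hJh, ← lie_skew (J Z) X, map_neg, LinearMap.neg_apply]
  rw [map_sub, LinearMap.sub_apply]
  linarith [hKoszul X (J Y) Z, hKoszul X Y (J Z), hJ_skew (D X Y) Z, hJ_skew ⁅X, Y⁆ Z,
    hJ_skew Y ⁅X, Z⁆, hJh ⁅X, J Y⁆ Z, hclosed X Y Z, hclosed X (J Y) (J Z),
    hh_symm X ⁅J Y, Z⁆, hh_symm X ⁅Y, J Z⁆, hh_symm Y ⁅X, J Z⁆, hh_symm (J ⁅X, Z⁆) Y]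

theorem kahlerForm_closed_of_parallel (hh_symm : ∀ X Y, h X Y = h Y X)
    (hh_nondeg : ∀ X, (∀ Y, h X Y = 0) → X = 0)
    (hKoszul : ∀ X Y Z, 2 * h (D X Y) Z = h ⁅X, Y⁆ Z - h Y ⁅X, Z⁆ - h X ⁅Y, Z⁆)
    (hJ : ∀ X, J (J X) = -X) (hJh : ∀ X Y, h (J X) (J Y) = h X Y)
    (hDJ : ∀ X Y, D X (J Y) = J (D X Y)) (X Y Z : L) :
    h (J ⁅X, Y⁆) Z + h (J ⁅Y, Z⁆) X + h (J ⁅Z, X⁆) Y = 0 := by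
  refine closed_of_parallel (ω := h ∘ₗ J) (fun X Y => ?_)
    (torsion_free_of_koszul hh_nondeg hKoszul) (fun X Y Z => ?_) X Y Z
  · show h (J X) Y = -h (J Y) X
    rw [apply_apply_eq_neg_of_isometry hJ hJh, hh_symm]
  · show h (J (D X Y)) Z + h (J Y) (D X Z) = 0
    rw [← hDJ]
    exact metric_of_koszul hh_symm hKoszul X (J Y) Z

end LeviCivita

theorem integrable_born_iff_pseudoKahler_with_orthogonal_subalgebras_general
    (L : Type*) [LieRing L] [LieAlgebra ℝ L]
    (h : L →ₗ[ℝ] L →ₗ[ℝ] ℝ)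
    (hh_symm : ∀ X Y, h X Y = h Y X)
    (hh_nondeg : ∀ X, (∀ Y, h X Y = 0) → X = 0)
    (J : L →ₗ[ℝ] L)
    (gp gm : LieSubalgebra ℝ L)
    (D : L →ₗ[ℝ] L →ₗ[ℝ] L)
    (hKoszul : ∀ X Y Z, 2 * h (D X Y) Z = h ⁅X, Y⁆ Z - h Y ⁅X, Z⁆ - h X ⁅Y, Z⁆) :
    ((∀ X, J (J X) = -X) ∧
     (∀ X Y, h (J X) (J Y) = h X Y) ∧
     (∀ X Y, D X (J Y) = J (D X Y)) ∧
     IsCompl gp.toSubmodule gm.toSubmodule ∧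
     (∀ X ∈ gp, ∀ Y ∈ gm, h X Y = 0) ∧
     Submodule.map J gp.toSubmodule = gm.toSubmodule) ↔
    (∃ g ω A B, IsIntegrableBornStructure g h ω A B J ∧
      LinearMap.ker (A - LinearMap.id) = gp.toSubmodule ∧
      LinearMap.ker (A + LinearMap.id) = gm.toSubmodule) := by
  constructor
  · rintro ⟨hJ, hJh, hDJ, hcompl, horth, hmap⟩
    obtain ⟨A, hA, hkp, hkm⟩ := exists_involution_ker_eq_of_isCompl hcompl
    have hAh := (selfAdjoint_iff_ker_orthogonal hA hh_symm).2 (hkp ▸ hkm ▸ horth)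
    have hAJ := (map_ker_sub_id_eq_ker_add_id_iff hA hJ).1 (hkp ▸ hkm ▸ hmap)
    refine ⟨_, _, A, _, ⟨isBornStructure_of_compatible hh_symm hh_nondeg hJ hJh hA hAh hAJ,
      kahlerForm_closed_of_parallel hh_symm hh_nondeg hKoszul hJ hJh hDJ,
      nijenhuis_eq_zero_of_parallel hJ (torsion_free_of_koszul hh_nondeg hKoszul) hDJ,
      fun X Y hX hY => ?_, fun X Y hX hY => ?_⟩, hkp, hkm⟩
    · rw [← mem_ker_sub_id_iff, hkp] at hX hY ⊢
      exact gp.lie_mem hX hY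
    · rw [← mem_ker_add_id_iff, hkm] at hX hY ⊢
      exact gm.lie_mem hX hY
  · rintro ⟨g, ω, A, B, ⟨hBorn, hclosed, hN, -, -⟩, hkp, hkm⟩
    have hJh := hBorn.isometry_J
    have hAh := hBorn.selfAdjoint_A
    have hAJ := hBorn.anticomm_A_J
    simp only [hBorn.omega_apply] at hclosed
    obtain ⟨-, -, -, -, -, -, -, -, -, hA, -, hJ⟩ := hBorn
    refine ⟨hJ, hJh, parallel_of_closed_of_nijenhuis hh_symm hh_nondeg hKoszul hJ hJh hclosed hN,
      hkp ▸ hkm ▸ isCompl_ker_sub_id_ker_add_id hA, fun X hX Y hY => ?_,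
      hkp ▸ hkm ▸ (map_ker_sub_id_eq_ker_add_id_iff hA hJ).2 hAJ⟩
    exact (selfAdjoint_iff_ker_orthogonal hA hh_symm).1 hAh X (hkp ▸ hX) Y (hkm ▸ hY)

/-- An integrable Born structure on a Lie algebra is equivalent to a pseudo-Kähler
structure `(h, J)` together with a pair of complementary subalgebras that are
`h`-orthogonal and interchanged by `J`. -/
theorem integrable_born_iff_pseudoKahler_with_orthogonal_subalgebras
    (L : Type*) [LieRing L] [LieAlgebra ℝ L] [FiniteDimensional ℝ L]
    (h : L →ₗ[ℝ] L →ₗ[ℝ] ℝ)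
    (hh_symm : ∀ X Y, h X Y = h Y X)
    (hh_nondeg : ∀ X, (∀ Y, h X Y = 0) → X = 0)
    (J : L →ₗ[ℝ] L)
    (gp gm : LieSubalgebra ℝ L)
    (D : L →ₗ[ℝ] L →ₗ[ℝ] L)
    (hKoszul : ∀ X Y Z, 2 * h (D X Y) Z = h ⁅X, Y⁆ Z - h Y ⁅X, Z⁆ - h X ⁅Y, Z⁆) :
    ((∀ X, J (J X) = -X) ∧
     (∀ X Y, h (J X) (J Y) = h X Y) ∧
     (∀ X Y, D X (J Y) = J (D X Y)) ∧
     IsCompl gp.toSubmodule gm.toSubmodule ∧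
     (∀ X ∈ gp, ∀ Y ∈ gm, h X Y = 0) ∧
     Submodule.map J gp.toSubmodule = gm.toSubmodule) ↔
    (∃ g ω A B, IsIntegrableBornStructure g h ω A B J ∧
      LinearMap.ker (A - LinearMap.id) = gp.toSubmodule ∧
      LinearMap.ker (A + LinearMap.id) = gm.toSubmodule) :=
  integrable_born_iff_pseudoKahler_with_orthogonal_subalgebras_general L h hh_symm hh_nondeg J gp gm
    D hKoszul
end

section
/- Let 𝔤 be a finite-dimensional real Lie algebra which is the vector space direct sum of two Lie subalgebras 𝔤₊ and 𝔤₋, with projections pr₊, pr₋. Let h₋ be a nondegenerate symmetric bilinear form on 𝔤₋, let Q : 𝔤₊ → 𝔤₋ be a linear isomorphism, set h₊(X,Y) := h₋(QX,QY) on 𝔤₊, and let h be the bilinear form on 𝔤 restricting to h₊ on 𝔤₊, to h₋ on 𝔤₋, and with h(𝔤₊,𝔤₋) = 0. Let J be the endomorphism of 𝔤 with J(X₊) = QX₊ for X₊ ∈ 𝔤₊ and J(X₋) = −Q⁻¹X₋ for X₋ ∈ 𝔤₋. Define φ(X₋)Y₊ := pr₊([X₋,Y₊]) and ρ(X₊)Y₋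 := pr₋([X₊,Y₋]). Let ∇, ∇⁺, ∇⁻ be the Levi-Civita connections of h on 𝔤, of h₊ on 𝔤₊, and of h₋ on 𝔤₋. Then ∇_X(JY) = J(∇_X Y) for all X, Y ∈ 𝔤 (equivalently, the associated Born structure is integrable) if and only if: (1) φ(X₋)ᵃ Y₊ = Q⁻¹(∇⁻_{X₋}(QY₊)) for all X₋ ∈ 𝔤₋, Y₊ ∈ 𝔤₊ (antisymmetric part taken with respect to h₊); (2) φ(QX₊)ˢ Y₊ = φ(QY₊)ˢ X₊ for all X₊, Y₊ ∈ 𝔤₊; (3) ρ(X₊)ᵃ Y₋ = Q(∇⁺_{X₊}(Q⁻¹Y₋)) for all X₊ ∈ 𝔤₊, Y₋ ∈ 𝔤₋ (antisymmetric part with respect to h₋); (4) ρ(X₊)ˢ(QY₊) = ρ(Y₊)ˢ(QX₊) for all X₊, Y₊ ∈ 𝔤₊. -/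
/-!
Since `J` is `h`-skew, the Koszul formula gives `2 h((∇_X J) Y, Z) = K(X, JY, Z) + K(X, Y, JZ)`,
where `K(X, Y, Z) = h([X,Y],Z) - h(Y,[X,Z]) - h(X,[Y,Z])`; as `h` is nondegenerate, integrability
means that this expression vanishes. Since `J² = -1` gives `(∇_X J)(JY) = -J((∇_X J) Y)` and
`J(𝔤₋) = 𝔤₊`, it suffices to take `Y ∈ 𝔤₊`; splitting `X` and `Z` into their `𝔤₊`- and
`𝔤₋`-parts leaves four cases. In each, the `h`-orthogonality of `𝔤₊` and `𝔤₋` kills most terms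
and what remains is one of the conditions (1)–(4), read off through the Koszul formulas of `∇⁻`
and `∇⁺` in the cases `(𝔤₋, 𝔤₊, 𝔤₋)` and `(𝔤₊, 𝔤₊, 𝔤₋)`.
-/

section LinearAlgebra

variable {R V : Type*} [CommRing R] [AddCommGroup V] [Module R V] {U W : Submodule R V}

lemma Submodule.exists_add_eq_of_codisjoint (hcod : Codisjoint U W) (x : V) :
    ∃ (u : U) (w : W), (u : V) + w = x := by
  obtain ⟨u, w, hu, hw, rfl⟩ := Submodule.codisjoint_iff_exists_add_eq.mp hcod x
  exact ⟨⟨u, hu⟩, ⟨w, hw⟩, rfl⟩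

lemma apply_eq_zero_of_blocks (hcod : Codisjoint U W) {B : V →ₗ[R] V →ₗ[R] R}
    (hUU : ∀ x y : U, B x y = 0) (hUW : ∀ (x : U) (y : W), B x y = 0)
    (hWU : ∀ (x : W) (y : U), B x y = 0) (hWW : ∀ x y : W, B x y = 0) (x y : V) : B x y = 0 := by
  obtain ⟨u, w, rfl⟩ := Submodule.exists_add_eq_of_codisjoint hcod x
  obtain ⟨u', w', rfl⟩ := Submodule.exists_add_eq_of_codisjoint hcod y
  simp only [map_add, LinearMap.add_apply, hUU, hUW, hWU, hWW, add_zero]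

lemma separatingLeft_of_blocks (hcod : Codisjoint U W) {h : V →ₗ[R] V →ₗ[R] R}
    (hU : ∀ x : U, (∀ y : U, h x y = 0) → x = 0) (hW : ∀ x : W, (∀ y : W, h x y = 0) → x = 0)
    (hUW : ∀ (x : U) (y : W), h x y = 0) (hWU : ∀ (x : W) (y : U), h x y = 0) :
    h.SeparatingLeft := by
  intro x hx
  obtain ⟨u, w, rfl⟩ := Submodule.exists_add_eq_of_codisjoint hcod x
  have hu : u = 0 := hU u fun y => by simpa [hWU w y] using hx y
  have hw : w = 0 := hW w fun y => by simpa [hUW u y] using hx y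
  simp [hu, hw]

lemma apply_proj_left {h : V →ₗ[R] V →ₗ[R] R} {p q : V →ₗ[R] V} (hpq : ∀ x, p x + q x = x)
    (hq : ∀ x, q x ∈ W) (hWU : ∀ (x : W) (y : U), h x y = 0) (x : V) (y : U) :
    h (p x) y = h x y := by
  conv_rhs => rw [← hpq x]
  rw [map_add, LinearMap.add_apply, hWU ⟨q x, hq x⟩ y, add_zero]

lemma apply_proj_right {h : V →ₗ[R] V →ₗ[R] R} {p q : V →ₗ[R] V} (hpq : ∀ x, p x + q x = x)
    (hq : ∀ x, q x ∈ W) (hUW : ∀ (y : U) (x : W), h y x = 0) (y : U) (x : V) :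
    h y (p x) = h y x := by
  conv_rhs => rw [← hpq x]
  rw [map_add, hUW y ⟨q x, hq x⟩, add_zero]

def covDeriv (D : V →ₗ[R] V →ₗ[R] V) (J : V →ₗ[R] V) : V →ₗ[R] V →ₗ[R] V :=
  D.compl₂ J - D.compr₂ J

@[simp]
lemma covDeriv_apply (D : V →ₗ[R] V →ₗ[R] V) (J : V →ₗ[R] V) (X Y : V) :
    covDeriv D J X Y = D X (J Y) - J (D X Y) := rfl

lemma covDeriv_apply_right_of_sq {D : V →ₗ[R] V →ₗ[R] V} {J : V →ₗ[R] V}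
    (hJ : ∀ x, J (J x) = -x) (X Y : V) : covDeriv D J X (J Y) = -J (covDeriv D J X Y) := by
  simp only [covDeriv_apply, hJ, map_neg, map_sub]
  abel

lemma parallel_iff_covDeriv_apply_eq_zero {D : V →ₗ[R] V →ₗ[R] V} {J : V →ₗ[R] V}
    {h : V →ₗ[R] V →ₗ[R] R} (hcod : Codisjoint U W) (hJ : ∀ x, J (J x) = -x)
    (hJW : ∀ w : W, J w ∈ U) (hh : h.SeparatingLeft) :
    (∀ X Y, D X (J Y) = J (D X Y)) ↔ ∀ X (u : U) Z, h (covDeriv D J X u) Z = 0 := by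
  refine ⟨fun H X u Z => by rw [covDeriv_apply, H, sub_self, map_zero, LinearMap.zero_apply],
    fun H X Y => ?_⟩
  have hU : ∀ u : U, covDeriv D J X u = 0 := fun u => hh _ (H X u)
  obtain ⟨u, w, rfl⟩ := Submodule.exists_add_eq_of_codisjoint hcod Y
  have hw : (w : V) = J (-J w) := by rw [map_neg, hJ, neg_neg]
  rw [← sub_eq_zero, ← covDeriv_apply, map_add, hw, covDeriv_apply_right_of_sq hJ, hU u,
    hU ⟨_, neg_mem (hJW w)⟩, map_zero, neg_zero, add_zero]

end LinearAlgebra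

section Koszul

variable {R L : Type*} [CommRing R] [LieRing L] [LieAlgebra R L]

def koszul (h : L →ₗ[R] L →ₗ[R] R) (X Y Z : L) : R :=
  h ⁅X, Y⁆ Z - h Y ⁅X, Z⁆ - h X ⁅Y, Z⁆

def koszulJ (h : L →ₗ[R] L →ₗ[R] R) (J : L →ₗ[R] L) (X Y Z : L) : R :=
  koszul h X (J Y) Z + koszul h X Y (J Z)

lemma two_mul_apply_covDeriv {h : L →ₗ[R] L →ₗ[R] R} {D : L →ₗ[R] L →ₗ[R] L} {J : L →ₗ[R] L}
    (hD : ∀ X Y Z, 2 * h (D X Y) Z = koszul h X Y Z) (hJ : ∀ x y, h (J x) y = -h x (J y))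
    (X Y Z : L) : 2 * h (covDeriv D J X Y) Z = koszulJ h J X Y Z := by
  rw [covDeriv_apply, map_sub, LinearMap.sub_apply, mul_sub, hJ, mul_neg, hD, hD, koszulJ,
    sub_neg_eq_add]

end Koszul

section Bicross

variable {R L : Type*} [CommRing R] [LieRing L] [LieAlgebra R L] {P M : LieSubalgebra R L}
  {h : L →ₗ[R] L →ₗ[R] R} {hm : M →ₗ[R] M →ₗ[R] R} {Q : P ≃ₗ[R] M} {J : L →ₗ[R] L}

lemma koszulJ_P_P_P {prP prM : L →ₗ[R] L} (hpr : ∀ x, prP x + prM x = x) (hprM : ∀ x, prM x ∈ M)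
    (h_PM : ∀ (x : P) (y : M), h x y = 0) (h_MP : ∀ (x : M) (y : P), h x y = 0)
    (hsymm : ∀ x y, h x y = h y x) (hJP : ∀ x : P, J x = Q x) (a b c : P) :
    koszulJ h J a b c =
      (h (prP ⁅(Q c : L), (b : L)⁆) a + h b (prP ⁅(Q c : L), (a : L)⁆))
      - (h (prP ⁅(Q b : L), (c : L)⁆) a + h c (prP ⁅(Q b : L), (a : L)⁆)) := by
  simp only [apply_proj_left hpr hprM h_MP, apply_proj_right hpr hprM h_PM, koszulJ, koszul, hJP,
    ← LieSubalgebra.coe_bracket, h_PM, h_MP]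
  rw [← lie_skew (a : L) (Q b : L), ← lie_skew (a : L) (Q c : L), ← lie_skew (b : L) (Q c : L)]
  simp only [map_neg, LinearMap.neg_apply]
  linear_combination hsymm c ⁅(Q b : L), (a : L)⁆ - hsymm a ⁅(Q b : L), (c : L)⁆
    + hsymm a ⁅(Q c : L), (b : L)⁆

lemma koszulJ_M_P_P {prP prM : L →ₗ[R] L} (hpr : ∀ x, prP x + prM x = x) (hprP : ∀ x, prP x ∈ P)
    (h_PM : ∀ (x : P) (y : M), h x y = 0) (h_MP : ∀ (x : M) (y : P), h x y = 0)
    (hsymm : ∀ x y, h x y = h y x) (hJP : ∀ x : P, J x = Q x) (u : M) (b c : P) :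
    koszulJ h J u b c =
      (h (prM ⁅(c : L), (Q b : L)⁆) u + h (Q b) (prM ⁅(c : L), (u : L)⁆))
      - (h (prM ⁅(b : L), (Q c : L)⁆) u + h (Q c) (prM ⁅(b : L), (u : L)⁆)) := by
  have hpr' : ∀ x, prM x + prP x = x := fun x => by rw [add_comm, hpr]
  simp only [apply_proj_left hpr' hprP h_PM, apply_proj_right hpr' hprP h_MP, koszulJ, koszul, hJP,
    ← LieSubalgebra.coe_bracket, h_PM, h_MP]
  rw [← lie_skew (u : L) (c : L), ← lie_skew (Q b : L) (c : L), ← lie_skew (u : L) (b : L)]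
  simp only [map_neg, LinearMap.neg_apply]
  linear_combination hsymm u ⁅(c : L), (Q b : L)⁆ - hsymm ⁅(b : L), (u : L)⁆ (Q c)
    - hsymm u ⁅(b : L), (Q c : L)⁆

lemma koszulJ_P_P_M {prP prM : L →ₗ[R] L} (hpr : ∀ x, prP x + prM x = x) (hprP : ∀ x, prP x ∈ P)
    (h_PP : ∀ x y : P, h x y = hm (Q x) (Q y)) (h_MM : ∀ x y : M, h x y = hm x y)
    (h_PM : ∀ (x : P) (y : M), h x y = 0) (h_MP : ∀ (x : M) (y : P), h x y = 0)
    (hJP : ∀ x : P, J x = Q x) (hJM : ∀ x : M, J x = -(Q.symm x : L))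
    {Dp : P →ₗ[R] P →ₗ[R] P}
    (hKp : ∀ X Y Z : P,
      2 * h (Dp X Y : L) Z = h (⁅X, Y⁆ : P) Z - h Y (⁅X, Z⁆ : P) - h X (⁅Y, Z⁆ : P))
    (a b : P) (w : M) :
    koszulJ h J a b w =
      (h (prM ⁅(a : L), (Q b : L)⁆) w - h (Q b) (prM ⁅(a : L), (w : L)⁆))
      - 2 * h (Q (Dp a b)) w := by
  have hpr' : ∀ x, prM x + prP x = x := fun x => by rw [add_comm, hpr]
  have hK := hKp a b (Q.symm w)
  simp only [apply_proj_left hpr' hprP h_PM, apply_proj_right hpr' hprP h_MP, koszulJ, koszul, hJP,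
    hJM, map_neg, lie_neg, ← LieSubalgebra.coe_bracket, h_PM, h_PP, h_MM,
    LinearEquiv.apply_symm_apply] at hK ⊢
  linear_combination hK

lemma koszulJ_M_P_M {prP prM : L →ₗ[R] L} (hpr : ∀ x, prP x + prM x = x) (hprM : ∀ x, prM x ∈ M)
    (h_PP : ∀ x y : P, h x y = hm (Q x) (Q y)) (h_MM : ∀ x y : M, h x y = hm x y)
    (h_PM : ∀ (x : P) (y : M), h x y = 0) (h_MP : ∀ (x : M) (y : P), h x y = 0)
    (hJP : ∀ x : P, J x = Q x) (hJM : ∀ x : M, J x = -(Q.symm x : L))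
    {Dm : M →ₗ[R] M →ₗ[R] M}
    (hKm : ∀ X Y Z : M, 2 * hm (Dm X Y) Z = hm ⁅X, Y⁆ Z - hm Y ⁅X, Z⁆ - hm X ⁅Y, Z⁆)
    (u : M) (b c : P) :
    koszulJ h J u b (Q c) =
      2 * h (Q.symm (Dm u (Q b)) : L) c
      - (h (prP ⁅(u : L), (b : L)⁆) c - h b (prP ⁅(u : L), (c : L)⁆)) := by
  simp only [apply_proj_left hpr hprM h_MP, apply_proj_right hpr hprM h_PM, koszulJ, koszul, hJP,
    hJM, map_neg, lie_neg, ← LieSubalgebra.coe_bracket, h_MP, h_PP, h_MM,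
    LinearEquiv.apply_symm_apply, LinearEquiv.symm_apply_apply]
  linear_combination -hKm u (Q b) (Q c)

lemma bicross_J_apply_J (hcod : Codisjoint P.toSubmodule M.toSubmodule)
    (hJP : ∀ x : P, J x = Q x) (hJM : ∀ x : M, J x = -(Q.symm x : L)) (x : L) : J (J x) = -x := by
  obtain ⟨p, m, rfl⟩ := Submodule.exists_add_eq_of_codisjoint hcod x
  simp only [map_add, map_neg, hJP, hJM, LinearEquiv.symm_apply_apply, LinearEquiv.apply_symm_apply,
    neg_add]

lemma bicross_J_skew (hcod : Codisjoint P.toSubmodule M.toSubmodule)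
    (h_PP : ∀ x y : P, h x y = hm (Q x) (Q y)) (h_MM : ∀ x y : M, h x y = hm x y)
    (h_PM : ∀ (x : P) (y : M), h x y = 0) (h_MP : ∀ (x : M) (y : P), h x y = 0)
    (hJP : ∀ x : P, J x = Q x) (hJM : ∀ x : M, J x = -(Q.symm x : L)) (x y : L) :
    h (J x) y = -h x (J y) := by
  rw [eq_neg_iff_add_eq_zero]
  refine apply_eq_zero_of_blocks (B := h ∘ₗ J + h.compl₂ J) hcod ?_ ?_ ?_ ?_ x y <;> intro x y <;>
    simp [hJP, hJM, h_PP, h_MM, h_PM, h_MP]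

lemma bicross_form_symm (hcod : Codisjoint P.toSubmodule M.toSubmodule)
    (hm_symm : ∀ x y, hm x y = hm y x)
    (h_PP : ∀ x y : P, h x y = hm (Q x) (Q y)) (h_MM : ∀ x y : M, h x y = hm x y)
    (h_PM : ∀ (x : P) (y : M), h x y = 0) (h_MP : ∀ (x : M) (y : P), h x y = 0) (x y : L) :
    h x y = h y x := by
  rw [← sub_eq_zero]
  refine apply_eq_zero_of_blocks (B := h - h.flip) hcod ?_ ?_ ?_ ?_ x y <;> intro x y <;>
    simp [h_PP, h_MM, h_PM, h_MP, hm_symm]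

lemma bicross_form_separatingLeft (hcod : Codisjoint P.toSubmodule M.toSubmodule)
    (hm_nondeg : ∀ x, (∀ y, hm x y = 0) → x = 0)
    (h_PP : ∀ x y : P, h x y = hm (Q x) (Q y)) (h_MM : ∀ x y : M, h x y = hm x y)
    (h_PM : ∀ (x : P) (y : M), h x y = 0) (h_MP : ∀ (x : M) (y : P), h x y = 0) :
    h.SeparatingLeft := by
  refine separatingLeft_of_blocks hcod (fun x hx => ?_) (fun x hx => hm_nondeg x ?_) h_PM h_MP
  · refine Q.map_eq_zero_iff.mp (hm_nondeg _ fun y => ?_)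
    simpa [h_PP] using hx (Q.symm y)
  · simpa [h_MM] using hx

end Bicross

/-- Conditions (1)–(4) are stated by pairing both sides with a test vector `Z` under `h`;
(1) and (3) are doubled to avoid the factor `1/2` in the antisymmetric part. -/
theorem bicross_born_integrability_general
    (L : Type*) [LieRing L] [LieAlgebra ℝ L]
    (P M : LieSubalgebra ℝ L)
    (hcompl : IsCompl P.toSubmodule M.toSubmodule)
    (prP prM : L →ₗ[ℝ] L)
    (hprP : ∀ X, prP X ∈ P) (hprM : ∀ X, prM X ∈ M)
    (hpr : ∀ X, prP X + prM X = X)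
    (hm : (↥M) →ₗ[ℝ] (↥M) →ₗ[ℝ] ℝ)
    (hm_symm : ∀ X Y, hm X Y = hm Y X)
    (hm_nondeg : ∀ X, (∀ Y, hm X Y = 0) → X = 0)
    (Q : (↥P) ≃ₗ[ℝ] (↥M))
    (h : L →ₗ[ℝ] L →ₗ[ℝ] ℝ)
    (h_PP : ∀ X Y : ↥P, h (X : L) (Y : L) = hm (Q X) (Q Y))
    (h_MM : ∀ X Y : ↥M, h (X : L) (Y : L) = hm X Y)
    (h_PM : ∀ (X : ↥P) (Y : ↥M), h (X : L) (Y : L) = 0)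
    (h_MP : ∀ (X : ↥M) (Y : ↥P), h (X : L) (Y : L) = 0)
    (J : L →ₗ[ℝ] L)
    (hJP : ∀ X : ↥P, J (X : L) = ((Q X : ↥M) : L))
    (hJM : ∀ X : ↥M, J (X : L) = -((Q.symm X : ↥P) : L))
    (D : L →ₗ[ℝ] L →ₗ[ℝ] L)
    (hKoszul : ∀ X Y Z : L, 2 * h (D X Y) Z = h ⁅X, Y⁆ Z - h Y ⁅X, Z⁆ - h X ⁅Y, Z⁆)
    (Dp : (↥P) →ₗ[ℝ] (↥P) →ₗ[ℝ] (↥P))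
    (hKp : ∀ X Y Z : ↥P, 2 * h ((Dp X Y : ↥P) : L) (Z : L)
      = h ((⁅X, Y⁆ : ↥P) : L) (Z : L) - h (Y : L) ((⁅X, Z⁆ : ↥P) : L)
        - h (X : L) ((⁅Y, Z⁆ : ↥P) : L))
    (Dm : (↥M) →ₗ[ℝ] (↥M) →ₗ[ℝ] (↥M))
    (hKm : ∀ X Y Z : ↥M, 2 * hm (Dm X Y) Z = hm ⁅X, Y⁆ Z - hm Y ⁅X, Z⁆ - hm X ⁅Y, Z⁆) :
    (∀ X Y : L, D X (J Y) = J (D X Y)) ↔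
    ((∀ (X : ↥M) (Y Z : ↥P),
        h (prP ⁅(X : L), (Y : L)⁆) (Z : L) - h (Y : L) (prP ⁅(X : L), (Z : L)⁆)
          = 2 * h ((Q.symm (Dm X (Q Y)) : ↥P) : L) (Z : L)) ∧
     (∀ X Y Z : ↥P,
        h (prP ⁅((Q X : ↥M) : L), (Y : L)⁆) (Z : L)
            + h (Y : L) (prP ⁅((Q X : ↥M) : L), (Z : L)⁆)
          = h (prP ⁅((Q Y : ↥M) : L), (X : L)⁆) (Z : L)
            + h (X : L) (prP ⁅((Q Y : ↥M) : L), (Z : L)⁆)) ∧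
     (∀ (X : ↥P) (Y Z : ↥M),
        h (prM ⁅(X : L), (Y : L)⁆) (Z : L) - h (Y : L) (prM ⁅(X : L), (Z : L)⁆)
          = 2 * h ((Q (Dp X (Q.symm Y)) : ↥M) : L) (Z : L)) ∧
     (∀ (X Y : ↥P) (Z : ↥M),
        h (prM ⁅(X : L), ((Q Y : ↥M) : L)⁆) (Z : L)
            + h ((Q Y : ↥M) : L) (prM ⁅(X : L), (Z : L)⁆)
          = h (prM ⁅(Y : L), ((Q X : ↥M) : L)⁆) (Z : L)
            + h ((Q X : ↥M) : L) (prM ⁅(Y : L), (Z : L)⁆))) := by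
  have hcod := hcompl.codisjoint
  have hsymm := bicross_form_symm hcod hm_symm h_PP h_MM h_PM h_MP
  have hT := two_mul_apply_covDeriv hKoszul (bicross_J_skew hcod h_PP h_MM h_PM h_MP hJP hJM)
  have hPPP (a b c : P) := (hT a b c).trans (koszulJ_P_P_P hpr hprM h_PM h_MP hsymm hJP a b c)
  have hMPP (u : M) (b c : P) := (hT u b c).trans (koszulJ_M_P_P hpr hprP h_PM h_MP hsymm hJP u b c)
  have hPPM (a b : P) (w : M) :=
    (hT a b w).trans (koszulJ_P_P_M hpr hprP h_PP h_MM h_PM h_MP hJP hJM hKp a b w)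
  have hMPM (u : M) (b c : P) :=
    (hT u b _).trans (koszulJ_M_P_M hpr hprM h_PP h_MM h_PM h_MP hJP hJM hKm u b c)
  have hJW (w : M) : J w ∈ P := by rw [hJM]; exact neg_mem (Q.symm w).2
  rw [parallel_iff_covDeriv_apply_eq_zero hcod (bicross_J_apply_J hcod hJP hJM) hJW
    (bicross_form_separatingLeft hcod hm_nondeg h_PP h_MM h_PM h_MP)]
  constructor
  · intro H
    refine ⟨fun u b c => ?_, fun X Y Z => ?_, fun a v w => ?_, fun X Y u => ?_⟩
    · linear_combination hMPM u b c - 2 * H u b (Q c)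
    · linear_combination -hPPP Z Y X + 2 * H Z Y X
    · have e := hPPM a (Q.symm v) w
      rw [LinearEquiv.apply_symm_apply] at e
      linear_combination -e + 2 * H a (Q.symm v) w
    · linear_combination -hMPP u Y X + 2 * H u Y X
  · rintro ⟨H1, H2, H3, H4⟩ X b Z
    refine apply_eq_zero_of_blocks (B := h ∘ₗ (covDeriv D J).flip b) hcod ?_ ?_ ?_ ?_ X Z <;>
      simp only [LinearMap.comp_apply, LinearMap.flip_apply]
    · intro a c
      linear_combination (hPPP a b c + H2 c b a) / 2
    · intro a w
      have h3 := H3 a (Q b) w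
      rw [LinearEquiv.symm_apply_apply] at h3
      linear_combination (hPPM a b w + h3) / 2
    · intro u c
      linear_combination (hMPP u b c + H4 c b u) / 2
    · intro u w
      have e := hMPM u b (Q.symm w)
      rw [LinearEquiv.apply_symm_apply] at e
      linear_combination (e - H1 u b (Q.symm w)) / 2

/-- Integrability criterion for the Born structure associated with bicross product data
`(𝔤₊, 𝔤₋, h₋, Q, φ, ρ)`, where `φ(X₋)Y₊ = pr₊[X₋,Y₊]` and `ρ(X₊)Y₋ = pr₋[X₊,Y₋]`.
The conditions on the `h`-symmetric and `h`-antisymmetric parts of `φ` and `ρ` are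
expressed by testing against the nondegenerate bilinear forms. -/
theorem bicross_born_integrability
    (L : Type*) [LieRing L] [LieAlgebra ℝ L] [FiniteDimensional ℝ L]
    (P M : LieSubalgebra ℝ L)
    (hcompl : IsCompl P.toSubmodule M.toSubmodule)
    (prP prM : L →ₗ[ℝ] L)
    (hprP : ∀ X, prP X ∈ P) (hprM : ∀ X, prM X ∈ M)
    (hpr : ∀ X, prP X + prM X = X)
    (hm : (↥M) →ₗ[ℝ] (↥M) →ₗ[ℝ] ℝ)
    (hm_symm : ∀ X Y, hm X Y = hm Y X)
    (hm_nondeg : ∀ X, (∀ Y, hm X Y = 0) → X = 0)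
    (Q : (↥P) ≃ₗ[ℝ] (↥M))
    (h : L →ₗ[ℝ] L →ₗ[ℝ] ℝ)
    (h_PP : ∀ X Y : ↥P, h (X : L) (Y : L) = hm (Q X) (Q Y))
    (h_MM : ∀ X Y : ↥M, h (X : L) (Y : L) = hm X Y)
    (h_PM : ∀ (X : ↥P) (Y : ↥M), h (X : L) (Y : L) = 0)
    (h_MP : ∀ (X : ↥M) (Y : ↥P), h (X : L) (Y : L) = 0)
    (J : L →ₗ[ℝ] L)
    (hJP : ∀ X : ↥P, J (X : L) = ((Q X : ↥M) : L))
    (hJM : ∀ X : ↥M, J (X : L) = -((Q.symm X : ↥P) : L))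
    (D : L →ₗ[ℝ] L →ₗ[ℝ] L)
    (hKoszul : ∀ X Y Z : L, 2 * h (D X Y) Z = h ⁅X, Y⁆ Z - h Y ⁅X, Z⁆ - h X ⁅Y, Z⁆)
    (Dp : (↥P) →ₗ[ℝ] (↥P) →ₗ[ℝ] (↥P))
    (hKp : ∀ X Y Z : ↥P, 2 * h ((Dp X Y : ↥P) : L) (Z : L)
      = h ((⁅X, Y⁆ : ↥P) : L) (Z : L) - h (Y : L) ((⁅X, Z⁆ : ↥P) : L)
        - h (X : L) ((⁅Y, Z⁆ : ↥P) : L))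
    (Dm : (↥M) →ₗ[ℝ] (↥M) →ₗ[ℝ] (↥M))
    (hKm : ∀ X Y Z : ↥M, 2 * hm (Dm X Y) Z = hm ⁅X, Y⁆ Z - hm Y ⁅X, Z⁆ - hm X ⁅Y, Z⁆) :
    (∀ X Y : L, D X (J Y) = J (D X Y)) ↔
    ((∀ (X : ↥M) (Y Z : ↥P),
        h (prP ⁅(X : L), (Y : L)⁆) (Z : L) - h (Y : L) (prP ⁅(X : L), (Z : L)⁆)
          = 2 * h ((Q.symm (Dm X (Q Y)) : ↥P) : L) (Z : L)) ∧
     (∀ X Y Z : ↥P,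
        h (prP ⁅((Q X : ↥M) : L), (Y : L)⁆) (Z : L)
            + h (Y : L) (prP ⁅((Q X : ↥M) : L), (Z : L)⁆)
          = h (prP ⁅((Q Y : ↥M) : L), (X : L)⁆) (Z : L)
            + h (X : L) (prP ⁅((Q Y : ↥M) : L), (Z : L)⁆)) ∧
     (∀ (X : ↥P) (Y Z : ↥M),
        h (prM ⁅(X : L), (Y : L)⁆) (Z : L) - h (Y : L) (prM ⁅(X : L), (Z : L)⁆)
          = 2 * h ((Q (Dp X (Q.symm Y)) : ↥M) : L) (Z : L)) ∧
     (∀ (X Y : ↥P) (Z : ↥M),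
        h (prM ⁅(X : L), ((Q Y : ↥M) : L)⁆) (Z : L)
            + h ((Q Y : ↥M) : L) (prM ⁅(X : L), (Z : L)⁆)
          = h (prM ⁅(Y : L), ((Q X : ↥M) : L)⁆) (Z : L)
            + h ((Q X : ↥M) : L) (prM ⁅(Y : L), (Z : L)⁆))) :=
  bicross_born_integrability_general L P M hcompl prP prM hprP hprM hpr hm hm_symm hm_nondeg Q h
    h_PP h_MM h_PM h_MP J hJP hJM D hKoszul Dp hKp Dm hKm
end

section
/- Let 𝔤 be a finite-dimensional real Lie algebra which is the vector space direct sum of an abelian Lie ideal 𝔤₊ and a Lie subalgebra 𝔤₋. Let h₋ be a nondegenerate symmetric bilinear form on 𝔤₋ whose Levi-Civita connection ∇⁻ is flat, let Q : 𝔤₊ → 𝔤₋ be a linear isomorphism, set h₊(X,Y) := h₋(QX,QY), and suppose the bracket satisfies [X₋,Y₊] = Q⁻¹(∇⁻_{X₋}(QY₊)) for all X₋ ∈ 𝔤₋ and Y₊ ∈ 𝔤₊. Let h be the form on 𝔤 restricting to h₊ on 𝔤₊, to h₋ on 𝔤₋, with h(𝔤₊,𝔤₋) = 0, let J(X₊)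 = QX₊ for X₊ ∈ 𝔤₊ and J(X₋) = −Q⁻¹X₋ for X₋ ∈ 𝔤₋, and let ∇ be the Levi-Civita connection of h. Then ∇_X(JY) = J(∇_X Y) for all X, Y ∈ 𝔤 (so the associated Born structure is integrable), and h is flat: ∇_X∇_Y Z − ∇_Y∇_X Z − ∇_{[X,Y]}Z = 0 for all X, Y, Z ∈ 𝔤. -/
/-!
Under the linear isomorphism `Φ : 𝔤 ≃ 𝔤₋ × 𝔤₋`, `X ↦ (Q X₊, X₋)`, the metric `h` becomes
`h₋ ⊕ h₋`, the bracket becomes `⁅(a, b), (a', b')⁆ = (∇⁻_b a' - ∇⁻_{b'} a, ⁅b, b'⁆)` and `J`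
becomes `(a, b) ↦ (-b, a)`. The Koszul formula then identifies `∇_X` with `∇⁻_{X₋}` acting
diagonally on both factors: this commutes with `J`, and its curvature is that of `∇⁻` on each
factor.
-/

section Koszul

variable {K M : Type*} [Field K] [LieRing M] [LieAlgebra K M]
  {hm : M →ₗ[K] M →ₗ[K] K} {Dm : M →ₗ[K] M →ₗ[K] M}

theorem koszul_connection_metric [NeZero (2 : K)] (hm_symm : ∀ X Y, hm X Y = hm Y X)
    (hKm : ∀ X Y Z, 2 * hm (Dm X Y) Z = hm ⁅X, Y⁆ Z - hm Y ⁅X, Z⁆ - hm X ⁅Y, Z⁆)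
    (Z X Y : M) : hm (Dm Z X) Y + hm X (Dm Z Y) = 0 := by
  have skew : hm Z ⁅Y, X⁆ = -hm Z ⁅X, Y⁆ := by rw [← lie_skew X Y, map_neg, neg_neg]
  have h2 : (2 : K) * (hm (Dm Z X) Y + hm X (Dm Z Y)) = 0 := by
    linear_combination hKm Z X Y + hKm Z Y X + hm_symm ⁅Z, X⁆ Y + hm_symm ⁅Z, Y⁆ X
      + 2 * hm_symm X (Dm Z Y) - skew
  exact (mul_eq_zero.mp h2).resolve_left two_ne_zero

theorem koszul_doubled [NeZero (2 : K)] (hm_symm : ∀ X Y, hm X Y = hm Y X)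
    (hKm : ∀ X Y Z, 2 * hm (Dm X Y) Z = hm ⁅X, Y⁆ Z - hm Y ⁅X, Z⁆ - hm X ⁅Y, Z⁆)
    (a b a' b' a'' b'' : M) :
    2 * (hm (Dm b a') a'' + hm (Dm b b') b'') =
      (hm (Dm b a' - Dm b' a) a'' + hm ⁅b, b'⁆ b'')
        - (hm a' (Dm b a'' - Dm b'' a) + hm b' ⁅b, b''⁆)
        - (hm a (Dm b' a'' - Dm b'' a') + hm b ⁅b', b''⁆) := by
  have metric := koszul_connection_metric hm_symm hKm
  simp only [map_sub, LinearMap.sub_apply]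
  linear_combination hKm b b' b'' + metric b a' a'' + metric b' a a'' - metric b'' a a'
    + hm_symm (Dm b'' a) a'

end Koszul

section Doubled

variable {K V W : Type*} [Field K] [AddCommGroup V] [Module K V] [AddCommGroup W] [Module K W]

theorem LinearMap.separatingLeft_of_eq_prod {h : V →ₗ[K] V →ₗ[K] K} {hm : W →ₗ[K] W →ₗ[K] K}
    (hm_nondeg : hm.SeparatingLeft) (e : V ≃ₗ[K] W × W)
    (he : ∀ v w, h v w = hm (e v).1 (e w).1 + hm (e v).2 (e w).2) : h.SeparatingLeft := by
  intro v hv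
  have h₁ : (e v).1 = 0 := hm_nondeg _ fun a => by simpa [he] using hv (e.symm (a, 0))
  have h₂ : (e v).2 = 0 := hm_nondeg _ fun b => by simpa [he] using hv (e.symm (0, b))
  exact e.map_eq_zero_iff.mp (Prod.ext h₁ h₂)

theorem connection_comm_of_doubled {D : V →ₗ[K] V →ₗ[K] V} {Dm : W →ₗ[K] W →ₗ[K] W}
    (e : V ≃ₗ[K] W × W)
    (hD : ∀ X Y, e (D X Y) = (Dm (e X).2 (e Y).1, Dm (e X).2 (e Y).2))
    {J : V →ₗ[K] V} (hJ : ∀ Y, e (J Y) = (-(e Y).2, (e Y).1)) (X Y : V) :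
    D X (J Y) = J (D X Y) :=
  e.injective <| by simp [hD, hJ]

end Doubled

section DoubledLie

variable {K L M : Type*} [Field K] [LieRing L] [LieAlgebra K L]
  [LieRing M] [LieAlgebra K M] {hm : M →ₗ[K] M →ₗ[K] K} {Dm : M →ₗ[K] M →ₗ[K] M}
  {h : L →ₗ[K] L →ₗ[K] K} {D : L →ₗ[K] L →ₗ[K] L}

theorem connection_eq_of_doubled [NeZero (2 : K)] (hm_symm : ∀ X Y, hm X Y = hm Y X)
    (hm_nondeg : hm.SeparatingLeft)
    (hKm : ∀ X Y Z, 2 * hm (Dm X Y) Z = hm ⁅X, Y⁆ Z - hm Y ⁅X, Z⁆ - hm X ⁅Y, Z⁆)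
    (e : L ≃ₗ[K] M × M)
    (he_lie : ∀ X Y, e ⁅X, Y⁆ = (Dm (e X).2 (e Y).1 - Dm (e Y).2 (e X).1, ⁅(e X).2, (e Y).2⁆))
    (he_h : ∀ v w, h v w = hm (e v).1 (e w).1 + hm (e v).2 (e w).2)
    (hKoszul : ∀ X Y Z, 2 * h (D X Y) Z = h ⁅X, Y⁆ Z - h Y ⁅X, Z⁆ - h X ⁅Y, Z⁆) (X Y : L) :
    e (D X Y) = (Dm (e X).2 (e Y).1, Dm (e X).2 (e Y).2) := by
  rw [← e.eq_symm_apply, ← sub_eq_zero]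
  refine h.separatingLeft_of_eq_prod hm_nondeg e he_h _ fun Z => ?_
  have h2 : (2 : K) * h (D X Y - e.symm (Dm (e X).2 (e Y).1, Dm (e X).2 (e Y).2)) Z = 0 := by
    rw [map_sub, LinearMap.sub_apply, mul_sub, hKoszul]
    simp only [he_h, he_lie, LinearEquiv.apply_symm_apply]
    linear_combination -koszul_doubled hm_symm hKm (e X).1 (e X).2 (e Y).1 (e Y).2 (e Z).1 (e Z).2
  exact (mul_eq_zero.mp h2).resolve_left two_ne_zero

theorem flat_of_doubled (hm_flat : ∀ X Y Z, Dm X (Dm Y Z) - Dm Y (Dm X Z) - Dm ⁅X, Y⁆ Z = 0)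
    (e : L ≃ₗ[K] M × M) (he_lie : ∀ X Y, (e ⁅X, Y⁆).2 = ⁅(e X).2, (e Y).2⁆)
    (hD : ∀ X Y, e (D X Y) = (Dm (e X).2 (e Y).1, Dm (e X).2 (e Y).2)) (X Y Z : L) :
    D X (D Y Z) - D Y (D X Z) - D ⁅X, Y⁆ Z = 0 :=
  e.injective <| by simp [hD, he_lie, hm_flat]

end DoubledLie

section BornCoords

variable {K L : Type*} [Field K] [LieRing L] [LieAlgebra K L] {P M : LieSubalgebra K L}
  (hcompl : IsCompl P.toSubmodule M.toSubmodule) (Q : P ≃ₗ[K] M)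

noncomputable def bornCoords : L ≃ₗ[K] M × M :=
  (Submodule.prodEquivOfIsCompl _ _ hcompl).symm ≪≫ₗ Q.prodCongr (LinearEquiv.refl K M)

local notation "Φ" => bornCoords hcompl Q

theorem bornCoords_symm_apply (x : M × M) : (Φ).symm x = (Q.symm x.1 : L) + (x.2 : L) := rfl

@[simp]
theorem bornCoords_coe_left (x : P) : Φ x = (Q x, 0) := by
  simp [bornCoords]

@[simp]
theorem bornCoords_coe_right (x : M) : Φ x = (0, x) := by
  simp [bornCoords]
  rfl

theorem bornCoords_lie (habelian : ∀ X Y : P, ⁅(X : L), (Y : L)⁆ = 0)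
    {Dm : M →ₗ[K] M →ₗ[K] M}
    (hbracket : ∀ (X : M) (Y : P), ⁅(X : L), (Y : L)⁆ = ((Q.symm (Dm X (Q Y)) : P) : L))
    (X Y : L) : Φ ⁅X, Y⁆ = (Dm (Φ X).2 (Φ Y).1 - Dm (Φ Y).2 (Φ X).1, ⁅(Φ X).2, (Φ Y).2⁆) := by
  obtain ⟨⟨a, b⟩, rfl⟩ := (Φ).symm.surjective X
  obtain ⟨⟨a', b'⟩, rfl⟩ := (Φ).symm.surjective Y
  have hPM : ⁅((Q.symm a : P) : L), (b' : L)⁆ = -((Q.symm (Dm b' a) : P) : L) := by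
    rw [← lie_skew, hbracket, Q.apply_symm_apply]
  simp [bornCoords_symm_apply, habelian, hbracket, hPM, ← LieSubalgebra.coe_bracket,
    ← sub_eq_add_neg]

theorem bilin_apply_eq_bornCoords {hm : M →ₗ[K] M →ₗ[K] K} {h : L →ₗ[K] L →ₗ[K] K}
    (h_PP : ∀ X Y : P, h (X : L) (Y : L) = hm (Q X) (Q Y))
    (h_MM : ∀ X Y : M, h (X : L) (Y : L) = hm X Y)
    (h_PM : ∀ (X : P) (Y : M), h (X : L) (Y : L) = 0)
    (h_MP : ∀ (X : M) (Y : P), h (X : L) (Y : L) = 0) (v w : L) :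
    h v w = hm (Φ v).1 (Φ w).1 + hm (Φ v).2 (Φ w).2 := by
  obtain ⟨⟨a, b⟩, rfl⟩ := (Φ).symm.surjective v
  obtain ⟨⟨a', b'⟩, rfl⟩ := (Φ).symm.surjective w
  simp [bornCoords_symm_apply, h_PP, h_MM, h_PM, h_MP]

theorem bornCoords_apply_J {J : L →ₗ[K] L} (hJP : ∀ X : P, J (X : L) = ((Q X : M) : L))
    (hJM : ∀ X : M, J (X : L) = -((Q.symm X : P) : L)) (Y : L) :
    Φ (J Y) = (-(Φ Y).2, (Φ Y).1) := by
  obtain ⟨⟨a, b⟩, rfl⟩ := (Φ).symm.surjective Y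
  simp [bornCoords_symm_apply, hJP, hJM]

end BornCoords

theorem born_from_flat_general
    (L : Type*) [LieRing L] [LieAlgebra ℝ L]
    (P M : LieSubalgebra ℝ L)
    (hcompl : IsCompl P.toSubmodule M.toSubmodule)
    (habelian : ∀ X Y : ↥P, ⁅(X : L), (Y : L)⁆ = 0)
    (hm : (↥M) →ₗ[ℝ] (↥M) →ₗ[ℝ] ℝ)
    (hm_symm : ∀ X Y, hm X Y = hm Y X)
    (hm_nondeg : ∀ X, (∀ Y, hm X Y = 0) → X = 0)
    (Dm : (↥M) →ₗ[ℝ] (↥M) →ₗ[ℝ] (↥M))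
    (hKm : ∀ X Y Z : ↥M, 2 * hm (Dm X Y) Z = hm ⁅X, Y⁆ Z - hm Y ⁅X, Z⁆ - hm X ⁅Y, Z⁆)
    (hm_flat : ∀ X Y Z : ↥M, Dm X (Dm Y Z) - Dm Y (Dm X Z) - Dm ⁅X, Y⁆ Z = 0)
    (Q : (↥P) ≃ₗ[ℝ] (↥M))
    (hbracket : ∀ (X : ↥M) (Y : ↥P),
      ⁅(X : L), (Y : L)⁆ = ((Q.symm (Dm X (Q Y)) : ↥P) : L))
    (h : L →ₗ[ℝ] L →ₗ[ℝ] ℝ)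
    (h_PP : ∀ X Y : ↥P, h (X : L) (Y : L) = hm (Q X) (Q Y))
    (h_MM : ∀ X Y : ↥M, h (X : L) (Y : L) = hm X Y)
    (h_PM : ∀ (X : ↥P) (Y : ↥M), h (X : L) (Y : L) = 0)
    (h_MP : ∀ (X : ↥M) (Y : ↥P), h (X : L) (Y : L) = 0)
    (J : L →ₗ[ℝ] L)
    (hJP : ∀ X : ↥P, J (X : L) = ((Q X : ↥M) : L))
    (hJM : ∀ X : ↥M, J (X : L) = -((Q.symm X : ↥P) : L))
    (D : L →ₗ[ℝ] L →ₗ[ℝ] L)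
    (hKoszul : ∀ X Y Z : L, 2 * h (D X Y) Z = h ⁅X, Y⁆ Z - h Y ⁅X, Z⁆ - h X ⁅Y, Z⁆) :
    (∀ X Y : L, D X (J Y) = J (D X Y)) ∧
    (∀ X Y Z : L, D X (D Y Z) - D Y (D X Z) - D ⁅X, Y⁆ Z = 0) := by
  have hΦ_lie := bornCoords_lie hcompl Q habelian hbracket
  have hD := connection_eq_of_doubled hm_symm hm_nondeg hKm _ hΦ_lie
    (bilin_apply_eq_bornCoords hcompl Q h_PP h_MM h_PM h_MP) hKoszul
  exact ⟨connection_comm_of_doubled _ hD (bornCoords_apply_J hcompl Q hJP hJM),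
    flat_of_doubled hm_flat _ (fun X Y => congrArg Prod.snd (hΦ_lie X Y)) hD⟩

/-- From any flat pseudo-Riemannian Lie algebra `(𝔤₋, h₋)` one obtains an integrable
Born structure on the semidirect product `𝔤₊ ⋊_φ 𝔤₋` with `φ(X₋) = Q⁻¹ ∘ ∇⁻_{X₋} ∘ Q`;
moreover the resulting metric `h` is flat. -/
theorem born_from_flat
    (L : Type*) [LieRing L] [LieAlgebra ℝ L] [FiniteDimensional ℝ L]
    (P M : LieSubalgebra ℝ L)
    (hcompl : IsCompl P.toSubmodule M.toSubmodule)
    (habelian : ∀ X Y : ↥P, ⁅(X : L), (Y : L)⁆ = 0)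
    (hideal : ∀ (X : L) (Y : ↥P), ⁅X, (Y : L)⁆ ∈ P)
    (hm : (↥M) →ₗ[ℝ] (↥M) →ₗ[ℝ] ℝ)
    (hm_symm : ∀ X Y, hm X Y = hm Y X)
    (hm_nondeg : ∀ X, (∀ Y, hm X Y = 0) → X = 0)
    (Dm : (↥M) →ₗ[ℝ] (↥M) →ₗ[ℝ] (↥M))
    (hKm : ∀ X Y Z : ↥M, 2 * hm (Dm X Y) Z = hm ⁅X, Y⁆ Z - hm Y ⁅X, Z⁆ - hm X ⁅Y, Z⁆)
    (hm_flat : ∀ X Y Z : ↥M, Dm X (Dm Y Z) - Dm Y (Dm X Z) - Dm ⁅X, Y⁆ Z = 0)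
    (Q : (↥P) ≃ₗ[ℝ] (↥M))
    (hbracket : ∀ (X : ↥M) (Y : ↥P),
      ⁅(X : L), (Y : L)⁆ = ((Q.symm (Dm X (Q Y)) : ↥P) : L))
    (h : L →ₗ[ℝ] L →ₗ[ℝ] ℝ)
    (h_PP : ∀ X Y : ↥P, h (X : L) (Y : L) = hm (Q X) (Q Y))
    (h_MM : ∀ X Y : ↥M, h (X : L) (Y : L) = hm X Y)
    (h_PM : ∀ (X : ↥P) (Y : ↥M), h (X : L) (Y : L) = 0)
    (h_MP : ∀ (X : ↥M) (Y : ↥P), h (X : L) (Y : L) = 0)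
    (J : L →ₗ[ℝ] L)
    (hJP : ∀ X : ↥P, J (X : L) = ((Q X : ↥M) : L))
    (hJM : ∀ X : ↥M, J (X : L) = -((Q.symm X : ↥P) : L))
    (D : L →ₗ[ℝ] L →ₗ[ℝ] L)
    (hKoszul : ∀ X Y Z : L, 2 * h (D X Y) Z = h ⁅X, Y⁆ Z - h Y ⁅X, Z⁆ - h X ⁅Y, Z⁆) :
    (∀ X Y : L, D X (J Y) = J (D X Y)) ∧
    (∀ X Y Z : L, D X (D Y Z) - D Y (D X Z) - D ⁅X, Y⁆ Z = 0) :=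
  born_from_flat_general L P M hcompl habelian hm hm_symm hm_nondeg Dm hKm hm_flat Q hbracket h h_PP
    h_MM h_PM h_MP J hJP hJM D hKoszul
end

section
/- Let 𝔤 be a finite-dimensional real Lie algebra which is the vector space direct sum of an abelian Lie ideal 𝔤₊ and a Lie subalgebra 𝔤₋. Let h₋ be a nondegenerate symmetric bilinear form on 𝔤₋ whose Levi-Civita connection ∇⁻ is flat, and let I₋ be an endomorphism of 𝔤₋ with I₋² = −Id, h₋(I₋X,I₋Y) = h₋(X,Y), and ∇⁻_X(I₋Y) = I₋(∇⁻_X Y) for all X, Y ∈ 𝔤₋ (a flat pseudo-Kähler structure). Let Q : 𝔤₊ → 𝔤₋ be a linear isomorphism, set h₊(X,Y) := h₋(QX,QY) and I₊ := −Q⁻¹∘I₋∘Q, and suppose the bracket satisfies [X₋,Y₊] = Q⁻¹(∇⁻_{X₋}(QY₊)) for all X₋ ∈ 𝔤₋, Y₊ ∈ 𝔤₊. Let h restrict to h₊ on 𝔤₊, to h₋ on 𝔤₋, with h(𝔤₊,𝔤₋) = 0; let J(X₊) = QX₊, J(X₋) = −Q⁻¹X₋; let I = I₊ on 𝔤₊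 and I = I₋ on 𝔤₋; and let ∇ be the Levi-Civita connection of h. Then (h, J, I) is a pseudo-hyperkähler structure on 𝔤: J² = I² = −Id, I∘J = −J∘I, h(JX,JY) = h(X,Y), h(IX,IY) = h(X,Y), ∇_X(JY) = J(∇_X Y) and ∇_X(IY) = I(∇_X Y) for all X, Y ∈ 𝔤. -/
/-!
By the Koszul formula, the Levi-Civita connection `∇` of `h` is explicit: `𝔤₊` is an abelian ideal
orthogonal to `𝔤₋`, so `∇_{X₊} = 0`, while `∇_{X₋}` is `∇⁻_{X₋}` on `𝔤₋` and
`ad X₋ = Q⁻¹ ∘ ∇⁻_{X₋} ∘ Q` on `𝔤₊`, which is `h`-skew because `∇⁻` is metric.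
Transported by `Q`, each `∇_X` thus acts as the same `∇⁻_{X₋}` on both summands, while `J` and `I`
are assembled from `Q`, `Q⁻¹` and `I₋`. All identities can therefore be checked summand by summand,
and the parallelism of `I` reduces to that of `I₋`.
-/

namespace LinearMap

variable {R L N : Type*} [CommRing R] [AddCommGroup L] [Module R L] [AddCommGroup N] [Module R N]
  {P M : Submodule R L}

theorem apply_eq_of_codisjoint (hcod : Codisjoint P M) {f g : L →ₗ[R] N}
    (hP : ∀ x : P, f x = g x) (hM : ∀ x : M, f x = g x) (x : L) : f x = g x :=
  congr($(ext_on_codisjoint hcod (fun x hx ↦ hP ⟨x, hx⟩) (fun x hx ↦ hM ⟨x, hx⟩)) x)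

theorem apply₂_eq_of_codisjoint (hcod : Codisjoint P M) {f g : L →ₗ[R] L →ₗ[R] N}
    (hPP : ∀ (x : P) (y : P), f x y = g x y) (hPM : ∀ (x : P) (y : M), f x y = g x y)
    (hMP : ∀ (x : M) (y : P), f x y = g x y) (hMM : ∀ (x : M) (y : M), f x y = g x y)
    (x y : L) : f x y = g x y :=
  apply_eq_of_codisjoint hcod (f := f x) (g := g x)
    (fun y ↦ apply_eq_of_codisjoint hcod (f := f.flip y) (g := g.flip y) (hPP · y) (hMP · y) x)
    (fun y ↦ apply_eq_of_codisjoint hcod (f := f.flip y) (g := g.flip y) (hPM · y) (hMM · y) x) y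

theorem SeparatingLeft.eq_of_codisjoint {B : L →ₗ[R] L →ₗ[R] N} (hB : B.SeparatingLeft)
    (hcod : Codisjoint P M) {a c : L} (hP : ∀ z : P, B a z = B c z) (hM : ∀ z : M, B a z = B c z) :
    a = c :=
  sub_eq_zero.1 <| hB _ fun z ↦ by
    rw [map_sub, sub_apply, sub_eq_zero, apply_eq_of_codisjoint hcod hP hM]

theorem separatingLeft_of_codisjoint {B : L →ₗ[R] L →ₗ[R] N} (hcod : Codisjoint P M)
    (hP : ∀ x : P, (∀ y : P, B x y = 0) → x = 0) (hM : ∀ x : M, (∀ y : M, B x y = 0) → x = 0)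
    (hPM_orth : ∀ (x : P) (y : M), B x y = 0) (hMP_orth : ∀ (x : M) (y : P), B x y = 0) :
    B.SeparatingLeft := by
  intro w hw
  obtain ⟨p, m, rfl⟩ := Submodule.mem_sup'.1 (hcod.eq_top ▸ Submodule.mem_top : w ∈ P ⊔ M)
  have hp : p = 0 := hP p fun y ↦ by simpa [hMP_orth] using hw y
  have hm : m = 0 := hM m fun y ↦ by simpa [hPM_orth] using hw y
  simp [hp, hm]

end LinearMap

section LeviCivita

variable {L : Type*} [LieRing L] [LieAlgebra ℝ L]

def IsLeviCivita (B : L →ₗ[ℝ] L →ₗ[ℝ] ℝ) (D : L →ₗ[ℝ] L →ₗ[ℝ] L) : Prop :=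
  ∀ X Y Z, 2 * B (D X Y) Z = B ⁅X, Y⁆ Z - B Y ⁅X, Z⁆ - B X ⁅Y, Z⁆

namespace IsLeviCivita

variable {B : L →ₗ[ℝ] L →ₗ[ℝ] ℝ} {D : L →ₗ[ℝ] L →ₗ[ℝ] L}

theorem metric (hD : IsLeviCivita B D) (hB : ∀ X Y, B X Y = B Y X) (X Y Z : L) :
    B (D X Y) Z = -B Y (D X Z) := by
  have := hD X Z Y
  rw [← lie_skew Z Y, map_neg, hB (D X Z), hB ⁅X, Z⁆] at this
  linarith [hD X Y Z, hB ⁅X, Y⁆ Z]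

theorem torsion_free (hD : IsLeviCivita B D) (hB : B.SeparatingLeft) (X Y : L) :
    D X Y - D Y X = ⁅X, Y⁆ :=
  sub_eq_zero.1 <| hB _ fun Z ↦ by
    have := hD Y X Z
    rw [← lie_skew Y X, map_neg, LinearMap.neg_apply] at this
    rw [map_sub, map_sub, LinearMap.sub_apply, LinearMap.sub_apply]
    linarith [hD X Y Z]

variable {P M : LieSubalgebra ℝ L}

theorem apply_subalgebra (hD : IsLeviCivita B D) (hB : B.SeparatingLeft)
    (hcod : Codisjoint P.toSubmodule M.toSubmodule) (hideal : ∀ (X : L) (Y : P), ⁅X, (Y : L)⁆ ∈ P)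
    {hm : M →ₗ[ℝ] M →ₗ[ℝ] ℝ} {Dm : M →ₗ[ℝ] M →ₗ[ℝ] M} (hDm : IsLeviCivita hm Dm)
    (hMM : ∀ X Y : M, B X Y = hm X Y) (hMP_orth : ∀ (X : M) (Y : P), B X Y = 0) (X Y : M) :
    D X Y = Dm X Y := by
  refine hB.eq_of_codisjoint hcod (fun Z ↦ ?_) (fun Z ↦ ?_)
  · have := hD X Y Z
    rw [← LieSubalgebra.coe_bracket, hMP_orth _ Z] at this
    rw [hMP_orth _ Z]
    linarith [(hMP_orth X ⟨_, hideal Y Z⟩ : B X ⁅(Y : L), Z⁆ = 0),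
      (hMP_orth Y ⟨_, hideal X Z⟩ : B Y ⁅(X : L), Z⁆ = 0)]
  · have := hD X Y Z
    simp only [← LieSubalgebra.coe_bracket, hMM] at this ⊢
    linarith [hDm X Y Z]

theorem apply_subalgebra_ideal (hD : IsLeviCivita B D) (hB : B.SeparatingLeft)
    (hcod : Codisjoint P.toSubmodule M.toSubmodule) (hideal : ∀ (X : L) (Y : P), ⁅X, (Y : L)⁆ ∈ P)
    (habelian : ∀ X Y : P, ⁅(X : L), (Y : L)⁆ = 0)
    (hPM_orth : ∀ (X : P) (Y : M), B X Y = 0) (hMP_orth : ∀ (X : M) (Y : P), B X Y = 0)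
    (hskew : ∀ (X : M) (Y Z : P), B ⁅(X : L), (Y : L)⁆ Z = -B Y ⁅(X : L), (Z : L)⁆)
    (X : M) (Y : P) : D X Y = ⁅(X : L), (Y : L)⁆ := by
  refine hB.eq_of_codisjoint hcod (fun Z ↦ ?_) (fun Z ↦ ?_)
  · have := hD X Y Z
    rw [habelian, map_zero, hskew] at this
    linarith [hskew X Y Z]
  · have hXY : B ⁅(X : L), (Y : L)⁆ Z = 0 := hPM_orth ⟨_, hideal X Y⟩ Z
    have hYXZ : B Y ⁅(X : L), Z⁆ = 0 := hPM_orth Y ⁅X, (show M from Z)⁆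
    have hYZ : ⁅(Y : L), (Z : L)⁆ ∈ P := by
      rw [← lie_skew]
      exact neg_mem (hideal Z Y)
    have hXYZ : B X ⁅(Y : L), Z⁆ = 0 := hMP_orth X ⟨_, hYZ⟩
    linarith [hD X Y Z]

theorem apply_ideal (hD : IsLeviCivita B D) (hB : B.SeparatingLeft) (hsymm : ∀ X Y, B X Y = B Y X)
    (hcod : Codisjoint P.toSubmodule M.toSubmodule) (habelian : ∀ X Y : P, ⁅(X : L), (Y : L)⁆ = 0)
    (hDMP : ∀ (X : M) (Y : P), D X Y = ⁅(X : L), (Y : L)⁆) (X : P) (Y : L) : D X Y = 0 := by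
  have hXM : ∀ Z : M, D X Z = 0 := fun Z ↦ by
    simpa [hDMP] using hD.torsion_free hB Z X
  refine LinearMap.apply_eq_of_codisjoint hcod (g := 0) (fun Z ↦ ?_) hXM Y
  refine hB.eq_of_codisjoint hcod (fun W ↦ ?_) (fun W ↦ ?_)
  · have := hD X Z W
    simp only [habelian, map_zero, LinearMap.zero_apply, sub_zero] at this ⊢
    linarith
  · rw [hD.metric hsymm, hXM W]
    simp

theorem apply_of_semidirect {hm : M →ₗ[ℝ] M →ₗ[ℝ] ℝ} {Dm : M →ₗ[ℝ] M →ₗ[ℝ] M} {Q : P ≃ₗ[ℝ] M}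
    (hD : IsLeviCivita B D) (hcod : Codisjoint P.toSubmodule M.toSubmodule)
    (habelian : ∀ X Y : P, ⁅(X : L), (Y : L)⁆ = 0) (hideal : ∀ (X : L) (Y : P), ⁅X, (Y : L)⁆ ∈ P)
    (hm_symm : ∀ X Y, hm X Y = hm Y X) (hm_nondeg : hm.SeparatingLeft) (hDm : IsLeviCivita hm Dm)
    (hbracket : ∀ (X : M) (Y : P), ⁅(X : L), (Y : L)⁆ = ((Q.symm (Dm X (Q Y)) : P) : L))
    (hPP : ∀ X Y : P, B X Y = hm (Q X) (Q Y)) (hMM : ∀ X Y : M, B X Y = hm X Y)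
    (hPM_orth : ∀ (X : P) (Y : M), B X Y = 0) (hMP_orth : ∀ (X : M) (Y : P), B X Y = 0) :
    (∀ (X : P) (Y : L), D X Y = 0) ∧ (∀ X Y : M, D X Y = Dm X Y) ∧
      ∀ (X : M) (Y : P), D X Y = ⁅(X : L), (Y : L)⁆ := by
  have hsymm : ∀ X Y, B X Y = B Y X :=
    LinearMap.apply₂_eq_of_codisjoint hcod (f := B) (g := B.flip)
      (fun _ _ ↦ by simp [hPP, hm_symm]) (fun _ _ ↦ by simp [hPM_orth, hMP_orth])
      (fun _ _ ↦ by simp [hPM_orth, hMP_orth]) (fun _ _ ↦ by simp [hMM, hm_symm])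
  have hB : B.SeparatingLeft := LinearMap.separatingLeft_of_codisjoint hcod
    (fun X hX ↦ Q.map_eq_zero_iff.1 <| hm_nondeg _ fun Z ↦ by simpa [hPP] using hX (Q.symm Z))
    (fun X hX ↦ hm_nondeg X fun Z ↦ by simpa [hMM] using hX Z) hPM_orth hMP_orth
  have hskew : ∀ (X : M) (Y Z : P), B ⁅(X : L), (Y : L)⁆ Z = -B Y ⁅(X : L), (Z : L)⁆ := by
    simp [hbracket, hPP, hDm.metric hm_symm]
  have hDMP := hD.apply_subalgebra_ideal hB hcod hideal habelian hPM_orth hMP_orth hskew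
  exact ⟨hD.apply_ideal hB hsymm hcod habelian hDMP,
    hD.apply_subalgebra hB hcod hideal hDm hMM hMP_orth, hDMP⟩

end IsLeviCivita

end LeviCivita

theorem hyperkahler_from_flat_kahler_general
    (L : Type*) [LieRing L] [LieAlgebra ℝ L]
    (P M : LieSubalgebra ℝ L)
    (hcompl : IsCompl P.toSubmodule M.toSubmodule)
    (habelian : ∀ X Y : ↥P, ⁅(X : L), (Y : L)⁆ = 0)
    (hideal : ∀ (X : L) (Y : ↥P), ⁅X, (Y : L)⁆ ∈ P)
    (hm : (↥M) →ₗ[ℝ] (↥M) →ₗ[ℝ] ℝ)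
    (hm_symm : ∀ X Y, hm X Y = hm Y X)
    (hm_nondeg : ∀ X, (∀ Y, hm X Y = 0) → X = 0)
    (Dm : (↥M) →ₗ[ℝ] (↥M) →ₗ[ℝ] (↥M))
    (hKm : ∀ X Y Z : ↥M, 2 * hm (Dm X Y) Z = hm ⁅X, Y⁆ Z - hm Y ⁅X, Z⁆ - hm X ⁅Y, Z⁆)
    (Im : (↥M) →ₗ[ℝ] (↥M))
    (hIm_sq : ∀ X, Im (Im X) = -X)
    (hIm_orth : ∀ X Y, hm (Im X) (Im Y) = hm X Y)
    (hIm_par : ∀ X Y, Dm X (Im Y) = Im (Dm X Y))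
    (Q : (↥P) ≃ₗ[ℝ] (↥M))
    (hbracket : ∀ (X : ↥M) (Y : ↥P),
      ⁅(X : L), (Y : L)⁆ = ((Q.symm (Dm X (Q Y)) : ↥P) : L))
    (h : L →ₗ[ℝ] L →ₗ[ℝ] ℝ)
    (h_PP : ∀ X Y : ↥P, h (X : L) (Y : L) = hm (Q X) (Q Y))
    (h_MM : ∀ X Y : ↥M, h (X : L) (Y : L) = hm X Y)
    (h_PM : ∀ (X : ↥P) (Y : ↥M), h (X : L) (Y : L) = 0)
    (h_MP : ∀ (X : ↥M) (Y : ↥P), h (X : L) (Y : L) = 0)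
    (J : L →ₗ[ℝ] L)
    (hJP : ∀ X : ↥P, J (X : L) = ((Q X : ↥M) : L))
    (hJM : ∀ X : ↥M, J (X : L) = -((Q.symm X : ↥P) : L))
    (I : L →ₗ[ℝ] L)
    (hIP : ∀ X : ↥P, I (X : L) = -((Q.symm (Im (Q X)) : ↥P) : L))
    (hIM : ∀ X : ↥M, I (X : L) = ((Im X : ↥M) : L))
    (D : L →ₗ[ℝ] L →ₗ[ℝ] L)
    (hKoszul : ∀ X Y Z : L, 2 * h (D X Y) Z = h ⁅X, Y⁆ Z - h Y ⁅X, Z⁆ - h X ⁅Y, Z⁆) :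
    (∀ X, J (J X) = -X) ∧
    (∀ X, I (I X) = -X) ∧
    (∀ X, I (J X) = - J (I X)) ∧
    (∀ X Y, h (J X) (J Y) = h X Y) ∧
    (∀ X Y, h (I X) (I Y) = h X Y) ∧
    (∀ X Y, D X (J Y) = J (D X Y)) ∧
    (∀ X Y, D X (I Y) = I (D X Y)) := by
  have hcod := hcompl.codisjoint
  obtain ⟨hD_P, hD_MM, hD_MP⟩ := IsLeviCivita.apply_of_semidirect hKoszul hcod habelian hideal
    hm_symm hm_nondeg hKm hbracket h_PP h_MM h_PM h_MP
  refine ⟨?_, ?_, ?_, ?_, ?_, ?_, ?_⟩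
  · exact LinearMap.apply_eq_of_codisjoint hcod (f := J ∘ₗ J) (g := -LinearMap.id)
      (fun _ ↦ by simp [hJP, hJM]) (fun _ ↦ by simp [hJP, hJM])
  · exact LinearMap.apply_eq_of_codisjoint hcod (f := I ∘ₗ I) (g := -LinearMap.id)
      (fun _ ↦ by simp [hIP, hIm_sq]) (fun _ ↦ by simp [hIM, hIm_sq])
  · exact LinearMap.apply_eq_of_codisjoint hcod (f := I ∘ₗ J) (g := -(J ∘ₗ I))
      (fun _ ↦ by simp [hJP, hIP, hIM]) (fun _ ↦ by simp [hJM, hIP, hIM])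
  · exact LinearMap.apply₂_eq_of_codisjoint hcod (f := h.compl₁₂ J J) (g := h)
      (fun _ _ ↦ by simp [hJP, h_MM, h_PP]) (fun _ _ ↦ by simp [hJP, hJM, h_MP, h_PM])
      (fun _ _ ↦ by simp [hJP, hJM, h_PM, h_MP]) (fun _ _ ↦ by simp [hJM, h_MM, h_PP])
  · exact LinearMap.apply₂_eq_of_codisjoint hcod (f := h.compl₁₂ I I) (g := h)
      (fun _ _ ↦ by simp [hIP, h_PP, hIm_orth]) (fun _ _ ↦ by simp [hIP, hIM, h_PM])
      (fun _ _ ↦ by simp [hIP, hIM, h_MP]) (fun _ _ ↦ by simp [hIM, h_MM, hIm_orth])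
  · exact LinearMap.apply₂_eq_of_codisjoint hcod (f := D.compl₂ J) (g := D.compr₂ J)
      (fun _ _ ↦ by simp [hD_P]) (fun _ _ ↦ by simp [hD_P])
      (fun _ _ ↦ by simp [hJP, hD_MM, hD_MP, hbracket])
      (fun _ _ ↦ by simp [hJM, hD_MM, hD_MP, hbracket])
  · exact LinearMap.apply₂_eq_of_codisjoint hcod (f := D.compl₂ I) (g := D.compr₂ I)
      (fun _ _ ↦ by simp [hD_P]) (fun _ _ ↦ by simp [hD_P])
      (fun _ _ ↦ by simp [hIP, hD_MP, hbracket, hIm_par])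
      (fun _ _ ↦ by simp [hIM, hD_MM, hIm_par])

/-- From a flat pseudo-Kähler Lie algebra `(𝔤₋, h₋, I₋)` one obtains a
pseudo-hyperkähler structure `(h, J, I)` on the semidirect product
`𝔤₊ ⋊_φ 𝔤₋` with `φ(X₋) = Q⁻¹ ∘ ∇⁻_{X₋} ∘ Q`. -/
theorem hyperkahler_from_flat_kahler
    (L : Type*) [LieRing L] [LieAlgebra ℝ L] [FiniteDimensional ℝ L]
    (P M : LieSubalgebra ℝ L)
    (hcompl : IsCompl P.toSubmodule M.toSubmodule)
    (habelian : ∀ X Y : ↥P, ⁅(X : L), (Y : L)⁆ = 0)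
    (hideal : ∀ (X : L) (Y : ↥P), ⁅X, (Y : L)⁆ ∈ P)
    (hm : (↥M) →ₗ[ℝ] (↥M) →ₗ[ℝ] ℝ)
    (hm_symm : ∀ X Y, hm X Y = hm Y X)
    (hm_nondeg : ∀ X, (∀ Y, hm X Y = 0) → X = 0)
    (Dm : (↥M) →ₗ[ℝ] (↥M) →ₗ[ℝ] (↥M))
    (hKm : ∀ X Y Z : ↥M, 2 * hm (Dm X Y) Z = hm ⁅X, Y⁆ Z - hm Y ⁅X, Z⁆ - hm X ⁅Y, Z⁆)
    (hm_flat : ∀ X Y Z : ↥M, Dm X (Dm Y Z) - Dm Y (Dm X Z) - Dm ⁅X, Y⁆ Z = 0)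
    (Im : (↥M) →ₗ[ℝ] (↥M))
    (hIm_sq : ∀ X, Im (Im X) = -X)
    (hIm_orth : ∀ X Y, hm (Im X) (Im Y) = hm X Y)
    (hIm_par : ∀ X Y, Dm X (Im Y) = Im (Dm X Y))
    (Q : (↥P) ≃ₗ[ℝ] (↥M))
    (hbracket : ∀ (X : ↥M) (Y : ↥P),
      ⁅(X : L), (Y : L)⁆ = ((Q.symm (Dm X (Q Y)) : ↥P) : L))
    (h : L →ₗ[ℝ] L →ₗ[ℝ] ℝ)
    (h_PP : ∀ X Y : ↥P, h (X : L) (Y : L) = hm (Q X) (Q Y))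
    (h_MM : ∀ X Y : ↥M, h (X : L) (Y : L) = hm X Y)
    (h_PM : ∀ (X : ↥P) (Y : ↥M), h (X : L) (Y : L) = 0)
    (h_MP : ∀ (X : ↥M) (Y : ↥P), h (X : L) (Y : L) = 0)
    (J : L →ₗ[ℝ] L)
    (hJP : ∀ X : ↥P, J (X : L) = ((Q X : ↥M) : L))
    (hJM : ∀ X : ↥M, J (X : L) = -((Q.symm X : ↥P) : L))
    (I : L →ₗ[ℝ] L)
    (hIP : ∀ X : ↥P, I (X : L) = -((Q.symm (Im (Q X)) : ↥P) : L))
    (hIM : ∀ X : ↥M, I (X : L) = ((Im X : ↥M) : L))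
    (D : L →ₗ[ℝ] L →ₗ[ℝ] L)
    (hKoszul : ∀ X Y Z : L, 2 * h (D X Y) Z = h ⁅X, Y⁆ Z - h Y ⁅X, Z⁆ - h X ⁅Y, Z⁆) :
    (∀ X, J (J X) = -X) ∧
    (∀ X, I (I X) = -X) ∧
    (∀ X, I (J X) = - J (I X)) ∧
    (∀ X Y, h (J X) (J Y) = h X Y) ∧
    (∀ X Y, h (I X) (I Y) = h X Y) ∧
    (∀ X Y, D X (J Y) = J (D X Y)) ∧
    (∀ X Y, D X (I Y) = I (D X Y)) :=
  hyperkahler_from_flat_kahler_general L P M hcompl habelian hideal hm hm_symm hm_nondeg Dm hKm Im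
    hIm_sq hIm_orth hIm_par Q hbracket h h_PP h_MM h_PM h_MP J hJP hJM I hIP hIM D hKoszul
end

section
/- Every two-dimensional real Lie algebra admits an integrable Born structure. -/
/-!
In a basis `e₀, e₁` of a two-dimensional Lie algebra the bracket is `⁅X, Y⁆ = det(X, Y) • ⁅e₀, e₁⁆`.
Hence the closedness condition holds for every bilinear form (its cyclic sum is an alternating
trilinear form on a plane), the Nijenhuis tensor of the rotation `e₀ ↦ e₁ ↦ -e₀` vanishes
(it preserves `det` and is traceless), and the eigenspaces of the swap `e₀ ↔ e₁` are lines,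
hence abelian subalgebras. So it suffices to write down the flat Born structure of `ℝ²` with
`ω = det`, `g` of signature `(1, 1)` and `h` Euclidean in the coordinates of any basis.
-/

namespace Module.Basis

section CommRing

variable {R M : Type*} [CommRing R] [AddCommGroup M] [Module R M] (b : Basis (Fin 2) R M)

theorem repr_smul_add_repr_smul (X : M) : b.repr X 0 • b 0 + b.repr X 1 • b 1 = X := by
  simpa only [Fin.sum_univ_two] using b.sum_repr X

noncomputable def areaForm : M →ₗ[R] M →ₗ[R] R :=
  (b.coord 0).smulRight (b.coord 1) - (b.coord 1).smulRight (b.coord 0)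

@[simp]
theorem areaForm_apply (X Y : M) :
    b.areaForm X Y = b.repr X 0 * b.repr Y 1 - b.repr X 1 * b.repr Y 0 := by
  simp [areaForm]

theorem areaForm_smul_add_cyclic (X Y Z : M) :
    b.areaForm X Y • Z + b.areaForm Y Z • X + b.areaForm Z X • Y = 0 :=
  b.ext_elem fun i => by fin_cases i <;> simp <;> ring

theorem areaForm_map_of_rotation {J : M →ₗ[R] M} (h0 : J (b 0) = b 1) (h1 : J (b 1) = -b 0)
    (X Y : M) :
    b.areaForm (J X) (J Y) = b.areaForm X Y ∧ b.areaForm (J X) Y + b.areaForm X (J Y) = 0 := by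
  have hJ : ∀ Z, J Z = b.repr Z 0 • b 1 - b.repr Z 1 • b 0 := fun Z => by
    conv_lhs => rw [← b.repr_smul_add_repr_smul Z]
    simp [h0, h1]
    abel
  constructor <;> simp [hJ]

theorem areaForm_eq_zero_of_swap {A : M →ₗ[R] M} (h0 : A (b 0) = b 1) (h1 : A (b 1) = b 0)
    {ε : R} {X Y : M} (hX : A X = ε • X) (hY : A Y = ε • Y) : b.areaForm X Y = 0 := by
  have hA : ∀ Z, b.repr (A Z) 0 = b.repr Z 1 := fun Z => by
    conv_lhs => rw [← b.repr_smul_add_repr_smul Z]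
    simp [h0, h1]
  have hX1 : b.repr X 1 = ε * b.repr X 0 := by rw [← hA, hX, map_smul]; rfl
  have hY1 : b.repr Y 1 = ε * b.repr Y 0 := by rw [← hA, hY, map_smul]; rfl
  rw [areaForm_apply, hX1, hY1]
  ring

end CommRing

section LieAlgebra

variable {R L : Type*} [CommRing R] [LieRing L] [LieAlgebra R L] (b : Basis (Fin 2) R L)

theorem lie_eq_areaForm_smul (X Y : L) : ⁅X, Y⁆ = b.areaForm X Y • ⁅b 0, b 1⁆ := by
  have hskew : ⁅b 1, b 0⁆ = -⁅b 0, b 1⁆ := (lie_skew _ _).symm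
  conv_lhs => rw [← b.repr_smul_add_repr_smul X, ← b.repr_smul_add_repr_smul Y]
  simp only [add_lie, lie_add, smul_lie, lie_smul, lie_self, smul_zero, add_zero, zero_add, hskew,
    areaForm_apply]
  module

theorem bilin_lie_cyclic_eq_zero (b : Basis (Fin 2) R L) (ω : L →ₗ[R] L →ₗ[R] R) (X Y Z : L) :
    ω ⁅X, Y⁆ Z + ω ⁅Y, Z⁆ X + ω ⁅Z, X⁆ Y = 0 := by
  rw [b.lie_eq_areaForm_smul X Y, b.lie_eq_areaForm_smul Y Z, b.lie_eq_areaForm_smul Z X]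
  calc _ = ω ⁅b 0, b 1⁆ (b.areaForm X Y • Z + b.areaForm Y Z • X + b.areaForm Z X • Y) := by
        simp only [map_add, map_smul, LinearMap.smul_apply, smul_eq_mul]
    _ = 0 := by rw [b.areaForm_smul_add_cyclic, map_zero]

theorem nijenhuis_eq_zero_of_rotation {J : L →ₗ[R] L} (h0 : J (b 0) = b 1)
    (h1 : J (b 1) = -b 0) (X Y : L) :
    ⁅J X, J Y⁆ - J ⁅J X, Y⁆ - J ⁅X, J Y⁆ - ⁅X, Y⁆ = 0 := by
  obtain ⟨hdet, htr⟩ := b.areaForm_map_of_rotation h0 h1 X Y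
  rw [b.lie_eq_areaForm_smul (J X), b.lie_eq_areaForm_smul (J X), b.lie_eq_areaForm_smul X,
    b.lie_eq_areaForm_smul X, hdet, map_smul, map_smul, eq_neg_of_add_eq_zero_left htr]
  module

theorem lie_eq_zero_of_swap {A : L →ₗ[R] L} (h0 : A (b 0) = b 1) (h1 : A (b 1) = b 0)
    {ε : R} {X Y : L} (hX : A X = ε • X) (hY : A Y = ε • Y) : ⁅X, Y⁆ = 0 := by
  rw [b.lie_eq_areaForm_smul, b.areaForm_eq_zero_of_swap h0 h1 hX hY, zero_smul]

end LieAlgebra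

section Born

variable {L : Type*} [LieRing L] [LieAlgebra ℝ L] (b : Basis (Fin 2) ℝ L)

noncomputable def lorentzForm : L →ₗ[ℝ] L →ₗ[ℝ] ℝ :=
  -(b.coord 0).smulRight (b.coord 0) + (b.coord 1).smulRight (b.coord 1)

noncomputable def euclideanForm : L →ₗ[ℝ] L →ₗ[ℝ] ℝ :=
  (b.coord 0).smulRight (b.coord 0) + (b.coord 1).smulRight (b.coord 1)

noncomputable def swapMap : L →ₗ[ℝ] L :=
  (b.coord 1).smulRight (b 0) + (b.coord 0).smulRight (b 1)

noncomputable def reflectionMap : L →ₗ[ℝ] L :=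
  -(b.coord 0).smulRight (b 0) + (b.coord 1).smulRight (b 1)

noncomputable def rotationMap : L →ₗ[ℝ] L :=
  (b.coord 0).smulRight (b 1) - (b.coord 1).smulRight (b 0)

theorem isBornStructure :
    IsBornStructure b.lorentzForm b.euclideanForm b.areaForm b.swapMap b.reflectionMap
      b.rotationMap := by
  have nondeg : ∀ X : L, b.repr X 0 = 0 → b.repr X 1 = 0 → X = 0 := fun X h0 h1 => by
    rw [← b.repr_smul_add_repr_smul X, h0, h1, zero_smul, zero_smul, add_zero]
  refine ⟨fun X Y => ?_, fun X hX => nondeg X ?_ ?_, fun X Y => ?_, fun X hX => nondeg X ?_ ?_,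
    fun X => ?_, fun X hX => nondeg X ?_ ?_, fun X Y => ?_, fun X Y => ?_, fun X Y => ?_,
    fun X => ?_, fun X => ?_, fun X => ?_⟩
  · simp [lorentzForm]; ring
  · simpa [lorentzForm] using hX (b 0)
  · simpa [lorentzForm] using hX (b 1)
  · simp [euclideanForm]; ring
  · simpa [euclideanForm] using hX (b 0)
  · simpa [euclideanForm] using hX (b 1)
  · simp; ring
  · simpa using hX (b 1)
  · simpa using hX (b 0)
  · simp [lorentzForm, swapMap]; ring
  · simp [lorentzForm, euclideanForm, reflectionMap]
  · simp [euclideanForm, rotationMap]; ring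
  · simp [swapMap, b.repr_smul_add_repr_smul]
  · simp [reflectionMap, b.repr_smul_add_repr_smul]
  · conv_rhs => rw [← b.repr_smul_add_repr_smul X]
    simp [rotationMap]
    abel

theorem isIntegrableBornStructure :
    IsIntegrableBornStructure b.lorentzForm b.euclideanForm b.areaForm b.swapMap
      b.reflectionMap b.rotationMap := by
  have hA0 : b.swapMap (b 0) = b 1 := by simp [swapMap]
  have hA1 : b.swapMap (b 1) = b 0 := by simp [swapMap]
  refine ⟨b.isBornStructure, b.bilin_lie_cyclic_eq_zero _,
    b.nijenhuis_eq_zero_of_rotation (by simp [rotationMap]) (by simp [rotationMap]),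
    fun X Y hX hY => ?_, fun X Y hX hY => ?_⟩
  · rw [b.lie_eq_zero_of_swap hA0 hA1 (ε := 1) (by rwa [one_smul]) (by rwa [one_smul]),
      map_zero]
  · rw [b.lie_eq_zero_of_swap hA0 hA1 (ε := -1) (by rwa [neg_one_smul]) (by rwa [neg_one_smul]),
      map_zero, neg_zero]

end Born

end Module.Basis

/-- Every two-dimensional real Lie algebra admits an integrable Born structure. -/
theorem two_dimensional_lie_algebra_is_born
    (L : Type*) [LieRing L] [LieAlgebra ℝ L] [FiniteDimensional ℝ L]
    (hdim : Module.finrank ℝ L = 2) :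
    ∃ (g h ω : L →ₗ[ℝ] L →ₗ[ℝ] ℝ) (A B J : L →ₗ[ℝ] L),
      IsIntegrableBornStructure g h ω A B J :=
  ⟨_, _, _, _, _, _, (Module.finBasisOfFinrankEq ℝ L hdim).isIntegrableBornStructure⟩
end
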